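/- arXiv:2108.01247 — 8 statements merged into one kernel-verified Lean document; each statement's English description precedes it below -/
import Mathlib

section
/- The Apéry constant satisfies ζ(3) = (16/(5π)) ∫₀¹ (arcsin x · (arccos x)²)/x dx, where the integral is taken over the real interval [0,1]. -/
/-!
Substituting `x = sin θ` turns the integral into `∫₀^{π/2} θ (π/2 - θ)² cot θ dθ`. The telescoping
identity `cos θ - cos ((2N+1)θ) = 2 sin θ ∑_{n<N} sin (2(n+1)θ)` expands `cot θ` as a finite sine
sum plus the remainder `cos ((2N+1)θ) / sin θ`. Against the cubic `θ (π/2 - θ)²` the sines integrate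
to `π (2 - (-1)ⁿ) / (8 (n+1)³)`, while the remainder integrals tend to `0` by the Riemann–Lebesgue
lemma. Hence the integral is `(π/4) ∑ (2 - (-1)ⁿ) / (n+1)³ = (π/4) (1 + 2/2³) ζ(3) = 5π ζ(3) / 16`.
-/

open Real Filter Topology MeasureTheory Set

namespace Real

theorem sinc_pos_of_abs_lt_pi {x : ℝ} (hx : |x| < π) : 0 < sinc x := by
  rcases lt_trichotomy x 0 with h | rfl | h
  · rw [sinc_of_ne_zero h.ne]
    exact div_pos_of_neg_of_neg (sin_neg_of_neg_of_neg_pi_lt h (by linarith [neg_abs_le x])) h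
  · simp
  · rw [sinc_of_ne_zero h.ne']
    exact div_pos (sin_pos_of_pos_of_lt_pi h (by linarith [le_abs_self x])) h

theorem sinc_mul_self (x : ℝ) : sinc x * x = sin x := by
  rcases eq_or_ne x 0 with rfl | hx
  · simp
  · rw [sinc_of_ne_zero hx, div_mul_cancel₀ _ hx]

theorem sinc_arcsin_pos (x : ℝ) : 0 < sinc (arcsin x) :=
  sinc_pos_of_abs_lt_pi <| (abs_le.mpr ⟨neg_pi_div_two_le_arcsin x, arcsin_le_pi_div_two x⟩).trans_lt
    (by linarith [pi_pos])

theorem continuousOn_div_sinc {f : ℝ → ℝ} (hf : Continuous f) :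
    ContinuousOn (fun θ => f θ / sinc θ) (Ioo (-π) π) :=
  hf.continuousOn.div continuous_sinc.continuousOn fun _ hθ =>
    (sinc_pos_of_abs_lt_pi (abs_lt.mpr hθ)).ne'

end Real

theorem tendsto_setIntegral_cos_mul_atTop {f : ℝ → ℝ} {s : Set ℝ} (hs : MeasurableSet s)
    (hf : IntegrableOn f s) :
    Tendsto (fun t : ℝ => ∫ θ in s, cos (t * θ) * f θ) atTop (𝓝 0) := by
  set F : ℝ → ℂ := s.indicator fun θ => (f θ : ℂ)
  have hF : Integrable F := (integrable_indicator_iff hs).mpr hf.ofReal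
  have hfreq : Tendsto (fun t : ℝ => t / (2 * π)) atTop (cocompact ℝ) :=
    (tendsto_id.atTop_div_const (by positivity)).mono_right atTop_le_cocompact
  have hRL := (Complex.continuous_re.tendsto 0).comp
    ((Real.tendsto_integral_exp_smul_cocompact F).comp hfreq)
  rw [Complex.zero_re] at hRL
  -- `∫ θ in s, cos (t θ) f θ` is the real part of the Fourier transform of `F` at `t / 2π`.
  refine hRL.congr fun t => ?_
  have hint : Integrable (fun v : ℝ => fourierChar (-(v * (t / (2 * π)))) • F v) := by
    simpa [mul_comm] using (Real.fourierIntegral_convergent_iff (V := ℝ) (t / (2 * π))).mpr hF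
  rw [Function.comp_apply, Function.comp_apply, ← RCLike.re_to_complex, ← integral_re hint,
    ← integral_indicator hs]
  congr 1 with θ
  by_cases hθ : θ ∈ s
  · have harg : 2 * π * -(θ * (t / (2 * π))) = -(t * θ) := by field_simp
    simp only [F, indicator_of_mem hθ, Circle.smul_def, fourierChar_apply, harg, smul_eq_mul]
    rw [RCLike.re_to_complex, Complex.re_mul_ofReal, Complex.exp_ofReal_mul_I_re, cos_neg]
  · simp only [F, indicator_of_notMem hθ, smul_zero, map_zero]

theorem hasSum_one_div_nat_add_one_pow_riemannZeta {k : ℕ} (hk : 1 < k) :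
    HasSum (fun n : ℕ => 1 / ((n : ℂ) + 1) ^ k) (riemannZeta k) := by
  have hs : Summable (fun n : ℕ => 1 / (n : ℂ) ^ k) := by
    simpa [← Complex.cpow_natCast] using Complex.summable_one_div_nat_cpow.mpr
      (by simpa using (by exact_mod_cast hk : (1 : ℝ) < k))
  rw [zeta_nat_eq_tsum_of_gt_one hk, hs.tsum_eq_zero_add]
  simpa [show k ≠ 0 by omega] using
    ((summable_nat_add_iff 1).mpr hs).hasSum

theorem hasSum_two_sub_neg_one_pow_div_nat_add_one_pow {k : ℕ} (hk : 1 < k) :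
    HasSum (fun n : ℕ => (2 - (-1) ^ n) / ((n : ℂ) + 1) ^ k)
      ((1 + 2 / 2 ^ k) * riemannZeta k) := by
  have hζ := hasSum_one_div_nat_add_one_pow_riemannZeta hk
  -- `1 - (-1)ⁿ` kills the even `n` and doubles the odd ones, where `n + 1 = 2 (m + 1)`.
  have hodd : HasSum (fun n : ℕ => (1 - (-1) ^ n) / ((n : ℂ) + 1) ^ k)
      (0 + 2 / 2 ^ k * riemannZeta k) := by
    refine HasSum.even_add_odd ?_ ((hζ.mul_left (2 / 2 ^ k)).congr_fun fun m => ?_)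
    · simp [pow_mul]
    · push_cast
      rw [pow_succ, pow_mul, neg_one_sq, one_pow, show (2 * (m : ℂ) + 1 + 1) = 2 * (m + 1) by ring,
        mul_pow]
      ring
  convert hζ.add hodd using 1
  · ext n
    field_simp
    ring
  · ring

theorem cos_sub_cos_two_mul_add_one_mul (N : ℕ) (θ : ℝ) :
    cos θ - cos ((2 * N + 1) * θ) = 2 * sin θ * ∑ n ∈ Finset.range N, sin (2 * (n + 1) * θ) := by
  induction N with
  | zero => simp
  | succ N ih =>
    have step : cos ((2 * N + 1) * θ) - cos ((2 * (N + 1) + 1) * θ) =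
        2 * sin θ * sin (2 * (N + 1) * θ) := by
      rw [cos_sub_cos, show ((2 * N + 1) * θ + (2 * (N + 1) + 1) * θ) / 2 = 2 * (N + 1) * θ by ring,
        show ((2 * N + 1) * θ - (2 * (N + 1) + 1) * θ) / 2 = -θ by ring, sin_neg]
      ring
    rw [Finset.sum_range_succ]
    push_cast
    linear_combination ih + step

theorem cos_mul_eq_sum_add_cos_mul {g q θ : ℝ} (h : g * sin θ = q) (N : ℕ) :
    cos θ * g = ∑ n ∈ Finset.range N, 2 * (q * sin (2 * (n + 1) * θ)) +
      cos ((2 * N + 1) * θ) * g := by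
  rw [← Finset.mul_sum, ← Finset.mul_sum]
  linear_combination g * cos_sub_cos_two_mul_add_one_mul N θ +
    2 * (∑ n ∈ Finset.range N, sin (2 * (n + 1) * θ)) * h

theorem hasDerivAt_antideriv_mul_sq_mul_sin {c : ℝ} (hc : c ≠ 0) (x : ℝ) :
    HasDerivAt (fun θ => -(θ * (π / 2 - θ) ^ 2) * cos (c * θ) / c
        + (π / 2 - θ) * (π / 2 - 3 * θ) * sin (c * θ) / c ^ 2
        + (6 * θ - 2 * π) * cos (c * θ) / c ^ 3 - 6 * sin (c * θ) / c ^ 4)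
      (x * (π / 2 - x) ^ 2 * sin (c * x)) x := by
  have hlin : HasDerivAt (fun θ => c * θ) c x := by simpa using (hasDerivAt_id x).const_mul c
  have hcos := (hasDerivAt_cos (c * x)).comp x hlin
  have hsin := (hasDerivAt_sin (c * x)).comp x hlin
  have hx := hasDerivAt_id' x
  have H := (((((hx.mul ((hx.const_sub (π / 2)).pow 2)).neg.mul hcos).div_const c).add
    ((((hx.const_sub (π / 2)).mul ((hx.const_mul 3).const_sub (π / 2))).mul hsin).div_const
      (c ^ 2))).add
    ((((hx.const_mul 6).sub_const (2 * π)).mul hcos).div_const (c ^ 3))).sub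
    ((hsin.const_mul 6).div_const (c ^ 4))
  refine H.congr_deriv ?_
  simp only [Function.comp_apply, Pi.mul_apply, Pi.pow_apply, Pi.neg_apply]
  field_simp
  ring

theorem integral_mul_sq_mul_sin_two_mul (n : ℕ) :
    ∫ θ in (0:ℝ)..π / 2, θ * (π / 2 - θ) ^ 2 * sin (2 * (n + 1) * θ) =
      π * (2 - (-1) ^ n) / (8 * (n + 1) ^ 3) := by
  have hc : (2 * ((n : ℝ) + 1)) ≠ 0 := by positivity
  rw [intervalIntegral.integral_eq_sub_of_hasDerivAt (fun x _ => hasDerivAt_antideriv_mul_sq_mul_sin hc x)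
    ((by fun_prop : Continuous _).intervalIntegrable _ _)]
  have hcos : cos (2 * (n + 1) * (π / 2)) = -(-1) ^ n := by
    rw [show 2 * ((n : ℝ) + 1) * (π / 2) = π + n * π by ring, cos_add_nat_mul_pi, cos_pi]
    ring
  have hsin : sin (2 * (n + 1) * (π / 2)) = 0 := by
    rw [show 2 * ((n : ℝ) + 1) * (π / 2) = ((n + 1 : ℕ) : ℝ) * π by push_cast; ring]
    exact sin_nat_mul_pi _
  simp only [hcos, hsin, mul_zero, cos_zero, sin_zero]
  field_simp
  ring

theorem uIcc_zero_pi_div_two_subset_Ioo : uIcc 0 (π / 2) ⊆ Ioo (-π) π := by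
  rw [uIcc_of_le (by positivity)]
  exact Icc_subset_Ioo (by linarith [pi_pos]) (by linarith [pi_pos])

/- `(π/2 - θ)² / sinc θ` is `θ (π/2 - θ)² / sin θ` with its removable singularity at `0` filled
in. -/
theorem continuousOn_sq_div_sinc :
    ContinuousOn (fun θ => (π / 2 - θ) ^ 2 / sinc θ) (uIcc 0 (π / 2)) :=
  (continuousOn_div_sinc (by fun_prop)).mono uIcc_zero_pi_div_two_subset_Ioo

theorem integral_cos_mul_sq_div_sinc_eq_sum_add (N : ℕ) :
    ∫ θ in (0:ℝ)..π / 2, cos θ * ((π / 2 - θ) ^ 2 / sinc θ) =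
      ∑ n ∈ Finset.range N, 2 * (π * (2 - (-1) ^ n) / (8 * (n + 1) ^ 3)) +
        ∫ θ in (0:ℝ)..π / 2, cos ((2 * N + 1) * θ) * ((π / 2 - θ) ^ 2 / sinc θ) := by
  have hkernel : ∀ θ ∈ uIcc 0 (π / 2), cos θ * ((π / 2 - θ) ^ 2 / sinc θ) =
      ∑ n ∈ Finset.range N, 2 * (θ * (π / 2 - θ) ^ 2 * sin (2 * (n + 1) * θ)) +
        cos ((2 * N + 1) * θ) * ((π / 2 - θ) ^ 2 / sinc θ) := fun θ hθ => by
    have hsinc := (sinc_pos_of_abs_lt_pi (abs_lt.mpr (uIcc_zero_pi_div_two_subset_Ioo hθ))).ne'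
    refine cos_mul_eq_sum_add_cos_mul ?_ N
    rw [← sinc_mul_self θ]
    field_simp
  rw [intervalIntegral.integral_congr hkernel, intervalIntegral.integral_add,
    intervalIntegral.integral_finsetSum]
  · simp only [intervalIntegral.integral_const_mul, integral_mul_sq_mul_sin_two_mul]
  · exact fun n _ => (by fun_prop : Continuous _).intervalIntegrable _ _
  · exact (by fun_prop : Continuous _).intervalIntegrable _ _
  · exact ((by fun_prop : Continuous fun θ : ℝ => cos ((2 * N + 1) * θ)).continuousOn.mul
      continuousOn_sq_div_sinc).intervalIntegrable

theorem tendsto_integral_cos_mul_sq_div_sinc :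
    Tendsto (fun N : ℕ => ∫ θ in (0:ℝ)..π / 2, cos ((2 * N + 1) * θ) * ((π / 2 - θ) ^ 2 / sinc θ))
      atTop (𝓝 0) := by
  have hfreq : Tendsto (fun N : ℕ => 2 * (N : ℝ) + 1) atTop atTop :=
    tendsto_atTop_add_const_right _ 1 (tendsto_natCast_atTop_atTop.const_mul_atTop two_pos)
  simp only [intervalIntegral.integral_of_le (by positivity : (0:ℝ) ≤ π / 2)]
  exact (tendsto_setIntegral_cos_mul_atTop measurableSet_Ioc
    continuousOn_sq_div_sinc.intervalIntegrable.1).comp hfreq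

theorem integral_cos_mul_sq_div_sinc :
    ((∫ θ in (0:ℝ)..π / 2, cos θ * ((π / 2 - θ) ^ 2 / sinc θ) : ℝ) : ℂ) =
      5 * π / 16 * riemannZeta 3 := by
  set I := ∫ θ in (0:ℝ)..π / 2, cos θ * ((π / 2 - θ) ^ 2 / sinc θ) with hI
  have hpartial : Tendsto (fun N : ℕ => ∑ n ∈ Finset.range N,
      2 * (π * (2 - (-1) ^ n) / (8 * (n + 1) ^ 3))) atTop (𝓝 I) := by
    refine (sub_zero I ▸ tendsto_const_nhds.sub tendsto_integral_cos_mul_sq_div_sinc).congr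
      fun N => ?_
    rw [hI, integral_cos_mul_sq_div_sinc_eq_sum_add N, add_sub_cancel_right]
  have hseries : HasSum (fun n : ℕ => ((2 * (π * (2 - (-1) ^ n) / (8 * (n + 1) ^ 3)) : ℝ) : ℂ))
      (5 * π / 16 * riemannZeta 3) := by
    have h := (hasSum_two_sub_neg_one_pow_div_nat_add_one_pow (k := 3) (by norm_num)).mul_left
      ((π : ℂ) / 4)
    rw [show (π : ℂ) / 4 * ((1 + 2 / 2 ^ 3) * riemannZeta (3 : ℕ)) = 5 * π / 16 * riemannZeta 3 by
      push_cast; ring] at h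
    refine h.congr_fun fun n => ?_
    push_cast
    field_simp
    ring
  refine tendsto_nhds_unique ?_ hseries.tendsto_sum_nat
  have := (Complex.continuous_ofReal.tendsto I).comp hpartial
  push_cast [Function.comp_def] at this ⊢
  exact this

theorem integral_arcsin_mul_arccos_sq_div_eq :
    ∫ x in (0:ℝ)..1, arcsin x * arccos x ^ 2 / x =
      ∫ θ in (0:ℝ)..π / 2, cos θ * ((π / 2 - θ) ^ 2 / sinc θ) := by
  set F : ℝ → ℝ := fun x => arccos x ^ 2 / sinc (arcsin x)
  have hF : Continuous F :=
    (continuous_arccos.pow 2).div (continuous_sinc.comp continuous_arcsin)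
      fun x => (sinc_arcsin_pos x).ne'
  have hsubst := intervalIntegral.integral_comp_mul_deriv (a := 0) (b := π / 2)
    (fun θ _ => hasDerivAt_sin θ) continuous_cos.continuousOn hF
  rw [sin_zero, sin_pi_div_two] at hsubst
  calc ∫ x in (0:ℝ)..1, arcsin x * arccos x ^ 2 / x
      = ∫ x in (0:ℝ)..1, F x := by
        refine intervalIntegral.integral_congr_ae (.of_forall fun x hx => ?_)
        rw [uIoc_of_le zero_le_one] at hx
        have hs := sinc_mul_self (arcsin x)
        rw [sin_arcsin (by linarith [hx.1]) hx.2] at hs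
        rw [div_eq_div_iff hx.1.ne' (sinc_arcsin_pos x).ne']
        linear_combination arccos x ^ 2 * hs
    _ = ∫ θ in (0:ℝ)..π / 2, cos θ * ((π / 2 - θ) ^ 2 / sinc θ) := by
        rw [← hsubst]
        refine intervalIntegral.integral_congr fun θ hθ => ?_
        rw [uIcc_of_le (by positivity)] at hθ
        have hθ' : arcsin (sin θ) = θ := arcsin_sin (by linarith [hθ.1, pi_pos]) hθ.2
        simp only [F, Function.comp_apply, arccos_eq_pi_div_two_sub_arcsin, hθ']
        ring

open Real in
theorem zeta_three_eq_arcsin_arccos_sq_integral :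
    riemannZeta 3 =
      ((16 / (5 * π)) * ∫ x in (0:ℝ)..1, arcsin x * (arccos x) ^ 2 / x : ℝ) := by
  rw [integral_arcsin_mul_arccos_sq_div_eq, Complex.ofReal_mul, integral_cos_mul_sq_div_sinc]
  push_cast
  field_simp
end

section
/- The Apéry constant satisfies ζ(3) = (32/(3π)) ∫₀¹ ((arsinh x)² · arccos x)/x dx, where the integral is taken over the real interval [0,1]. -/
/-!
Differentiating in `x` and swapping the order of integration gives
`arsinh² x = ∫₀^{π/2} log (1 + x² sin² θ) / sin θ dθ`; expanding the logarithm yields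
`arsinh² x = ∑ (-1)ⁿ Sₙ x^{2n+2} / (n+1)` with `Sₙ = ∫₀^{π/2} sin^{2n+1}`. The substitution
`x = cos θ` and an integration by parts give `∫₀¹ x^{2n+1} arccos x dx = Cₙ / (2n+2)` with
`Cₙ = ∫₀^{π/2} cos^{2n+2}`, and the Wallis relation `Sₙ Cₙ = π / (4(n+1))` turns the integral into
`(π/8) ∑ (-1)ⁿ / (n+1)³ = (π/8) (3/4) ζ(3)`.
-/

open Real intervalIntegral Set

lemma hasSum_log_one_add_of_abs_lt_one {y : ℝ} (hy : |y| < 1) :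
    HasSum (fun n : ℕ => (-1) ^ n * y ^ (n + 1) / (n + 1)) (log (1 + y)) := by
  have h := (hasSum_pow_div_log_of_abs_lt_one (x := -y) (by rwa [abs_neg])).neg
  rw [neg_neg, sub_neg_eq_add] at h
  refine h.congr_fun fun n => ?_
  rw [neg_pow, pow_succ]
  ring

lemma hasSum_intervalIntegral_of_summable_integral_norm {ι E : Type*} [Countable ι]
    [NormedAddCommGroup E] [NormedSpace ℝ E] {a b : ℝ} (hab : a ≤ b) {F : ι → ℝ → E}
    {f : ℝ → E} (hF : ∀ i, IntervalIntegrable (F i) MeasureTheory.volume a b)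
    (hsum : Summable fun i => ∫ t in a..b, ‖F i t‖)
    (hf : ∀ t ∈ Ioo a b, HasSum (fun i => F i t) (f t)) :
    HasSum (fun i => ∫ t in a..b, F i t) (∫ t in a..b, f t) := by
  simp_rw [integral_of_le hab] at hsum ⊢
  convert MeasureTheory.hasSum_integral_of_summable_integral_norm (fun i => (hF i).1) hsum using 1
  rw [MeasureTheory.integral_Ioc_eq_integral_Ioo, MeasureTheory.integral_Ioc_eq_integral_Ioo]
  exact MeasureTheory.setIntegral_congr_fun measurableSet_Ioo fun t ht => (hf t ht).tsum_eq.symm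

lemma summable_one_div_nat_add_one_pow {k : ℕ} (hk : 1 < k) :
    Summable fun n : ℕ => 1 / ((n : ℝ) + 1) ^ k := by
  refine ((summable_nat_add_iff 1).mpr (Real.summable_one_div_nat_pow.mpr hk)).congr fun n => ?_
  push_cast
  rfl

lemma tsum_neg_one_pow_div_add_one_pow {k : ℕ} (hk : 1 < k) :
    ∑' n : ℕ, (-1) ^ n / ((n : ℝ) + 1) ^ k = (1 - 2 / 2 ^ k) * ∑' n : ℕ, 1 / ((n : ℝ) + 1) ^ k := by
  set a : ℕ → ℝ := fun n => 1 / ((n : ℝ) + 1) ^ k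
  have ha : Summable a := summable_one_div_nat_add_one_pow hk
  have halt : Summable fun n : ℕ => (-1) ^ n / ((n : ℝ) + 1) ^ k :=
    ha.alternating.congr fun n => mul_one_div _ _
  have hdiff : HasSum (fun n : ℕ => a n - (-1) ^ n / ((n : ℝ) + 1) ^ k)
      (0 + 2 / 2 ^ k * ∑' n, a n) := by
    refine HasSum.even_add_odd (hasSum_zero.congr_fun fun m => ?_)
      ((ha.hasSum.mul_left (2 / 2 ^ k)).congr_fun fun m => ?_)
    · simp [a, pow_mul]
    · have hodd : ((2 * m + 1 : ℕ) : ℝ) + 1 = 2 * (m + 1) := by push_cast; ring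
      simp only [a, hodd, mul_pow, Odd.neg_one_pow ⟨m, rfl⟩]
      field_simp
      ring
  have := (ha.hasSum.sub halt.hasSum).unique hdiff
  linear_combination -this

lemma riemannZeta_natCast_eq_tsum {k : ℕ} (hk : 1 < k) :
    riemannZeta k = ((∑' n : ℕ, 1 / ((n : ℝ) + 1) ^ k : ℝ) : ℂ) := by
  rw [zeta_eq_tsum_one_div_nat_add_one_cpow (by simpa using hk), Complex.ofReal_tsum]
  congr 1 with n
  push_cast
  rw [Complex.cpow_natCast]

lemma integral_two_mul_mul_div_one_add_sq_mul_sq (x s : ℝ) :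
    ∫ t in (0:ℝ)..x, 2 * t * s / (1 + t ^ 2 * s ^ 2) = log (1 + x ^ 2 * s ^ 2) / s := by
  rcases eq_or_ne s 0 with rfl | hs
  · simp
  have hderiv (t : ℝ) :
      HasDerivAt (fun t => log (1 + t ^ 2 * s ^ 2) / s) (2 * t * s / (1 + t ^ 2 * s ^ 2)) t := by
    refine ((((hasDerivAt_pow 2 t).mul_const (s ^ 2)).const_add 1).log
      (by positivity)).div_const s |>.congr_deriv ?_
    field_simp
    norm_num [mul_comm]
  rw [integral_eq_sub_of_hasDerivAt (fun t _ => hderiv t) (Continuous.intervalIntegrable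
    (.div (by fun_prop) (by fun_prop) fun t => by positivity) _ _)]
  simp

lemma hasDerivAt_arsinh_mul_cos_div_sqrt (t θ : ℝ) :
    HasDerivAt (fun θ => -(arsinh (t * cos θ / √(1 + t ^ 2 * sin θ ^ 2)) / √(1 + t ^ 2)))
      (t * sin θ / (1 + t ^ 2 * sin θ ^ 2)) θ := by
  have hq : 0 < 1 + t ^ 2 * sin θ ^ 2 := by positivity
  have hw : 0 < √(1 + t ^ 2 * sin θ ^ 2) := sqrt_pos.mpr hq
  have hw2 : √(1 + t ^ 2 * sin θ ^ 2) ^ 2 = 1 + t ^ 2 * sin θ ^ 2 := sq_sqrt hq.le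
  have hA2 : √(1 + t ^ 2) ^ 2 = 1 + t ^ 2 := sq_sqrt (by positivity)
  have hsqrt : √(1 + (t * cos θ / √(1 + t ^ 2 * sin θ ^ 2)) ^ 2) =
      √(1 + t ^ 2) / √(1 + t ^ 2 * sin θ ^ 2) := by
    rw [← sqrt_sq (by positivity : 0 ≤ √(1 + t ^ 2) / √(1 + t ^ 2 * sin θ ^ 2))]
    congr 1
    field_simp
    linear_combination hw2 + t ^ 2 * sin_sq_add_cos_sq θ - hA2
  have hw' : HasDerivAt (fun θ => √(1 + t ^ 2 * sin θ ^ 2))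
      (t ^ 2 * (2 * sin θ * cos θ) / (2 * √(1 + t ^ 2 * sin θ ^ 2))) θ := by
    refine ((((hasDerivAt_sin θ).pow 2).const_mul (t ^ 2)).const_add 1).sqrt hq.ne'
      |>.congr_deriv ?_
    simp
  have h := (((hasDerivAt_arsinh _).comp θ (((hasDerivAt_cos θ).const_mul t).div hw'
    hw.ne')).div_const √(1 + t ^ 2)).neg
  refine h.congr_deriv ?_
  simp only [Pi.div_apply]
  rw [hsqrt]
  field_simp
  linear_combination (t * sin θ * (1 + t ^ 2 * sin θ ^ 2) - t * sin θ * √(1 + t ^ 2) ^ 2) * hw2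
    - t * sin θ * (1 + t ^ 2 * sin θ ^ 2) * hA2
    + t ^ 3 * sin θ * (1 + t ^ 2 * sin θ ^ 2) * sin_sq_add_cos_sq θ

lemma integral_mul_sin_div_one_add_sq_mul_sin_sq (t : ℝ) :
    ∫ θ in (0:ℝ)..(π / 2), t * sin θ / (1 + t ^ 2 * sin θ ^ 2) = arsinh t / √(1 + t ^ 2) := by
  rw [integral_eq_sub_of_hasDerivAt (fun θ _ => hasDerivAt_arsinh_mul_cos_div_sqrt t θ)
    (Continuous.intervalIntegrable (.div (by fun_prop) (by fun_prop) fun θ => by positivity) _ _)]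
  simp

lemma arsinh_sq_eq_integral_log_div_sin (x : ℝ) :
    arsinh x ^ 2 = ∫ θ in (0:ℝ)..(π / 2), log (1 + x ^ 2 * sin θ ^ 2) / sin θ := by
  have hcont :
      Continuous (Function.uncurry fun t θ : ℝ => 2 * t * sin θ / (1 + t ^ 2 * sin θ ^ 2)) :=
    .div (by fun_prop) (by fun_prop) fun _ => by positivity
  have hderiv (t : ℝ) : HasDerivAt (fun t => arsinh t ^ 2) (2 * (arsinh t / √(1 + t ^ 2))) t := by
    refine ((hasDerivAt_arsinh t).pow 2).congr_deriv ?_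
    simp only [Nat.cast_ofNat, Nat.add_one_sub_one, pow_one, div_eq_mul_inv]
    ring
  calc arsinh x ^ 2 = ∫ t in (0:ℝ)..x, 2 * (arsinh t / √(1 + t ^ 2)) := by
        rw [integral_eq_sub_of_hasDerivAt (fun t _ => hderiv t) (Continuous.intervalIntegrable
          (continuous_const.mul (.div continuous_arsinh (by fun_prop) fun t => by positivity)) _ _)]
        simp
    _ = ∫ t in (0:ℝ)..x, ∫ θ in (0:ℝ)..(π / 2), 2 * t * sin θ / (1 + t ^ 2 * sin θ ^ 2) := by
        refine integral_congr fun t _ => ?_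
        rw [← integral_mul_sin_div_one_add_sq_mul_sin_sq, ← integral_const_mul]
        congr 1 with θ
        ring
    _ = ∫ θ in (0:ℝ)..(π / 2), ∫ t in (0:ℝ)..x, 2 * t * sin θ / (1 + t ^ 2 * sin θ ^ 2) :=
        (MeasureTheory.intervalIntegral_intervalIntegral_swap
          (hcont.continuousOn.integrableOn_compact
            (isCompact_uIcc.prod isCompact_uIcc) |>.mono_set
            (prod_mono uIoc_subset_uIcc uIoc_subset_uIcc)))
    _ = _ := by simp_rw [integral_two_mul_mul_div_one_add_sq_mul_sq]

lemma hasSum_arsinh_sq {x : ℝ} (hx : |x| < 1) :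
    HasSum (fun n : ℕ => (-1) ^ n * x ^ (2 * n + 2) / (n + 1) *
      ∫ θ in (0:ℝ)..(π / 2), sin θ ^ (2 * n + 1)) (arsinh x ^ 2) := by
  have hx2 : x ^ 2 < 1 := by rwa [sq_lt_one_iff_abs_lt_one]
  simp_rw [← intervalIntegral.integral_const_mul]
  rw [arsinh_sq_eq_integral_log_div_sin]
  refine intervalIntegral.hasSum_integral_of_dominated_convergence (fun n _ => (x ^ 2) ^ n)
    (fun n => (Continuous.aestronglyMeasurable (by fun_prop))) (fun n => ?_)
    (.of_forall fun _ _ => summable_geometric_of_lt_one (sq_nonneg x) hx2) intervalIntegrable_const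
    (.of_forall fun θ hθ => ?_)
  · refine .of_forall fun θ _ => ?_
    rw [norm_mul, norm_div, norm_mul, norm_pow, norm_neg, norm_one, one_pow, one_mul, norm_pow,
      norm_pow, Real.norm_eq_abs, show 2 * n + 2 = 2 * (n + 1) by ring, pow_mul, sq_abs,
      Real.norm_of_nonneg (by positivity : (0:ℝ) ≤ n + 1), Real.norm_eq_abs]
    calc (x ^ 2) ^ (n + 1) / (n + 1) * |sin θ| ^ (2 * n + 1)
        ≤ (x ^ 2) ^ (n + 1) / 1 * 1 := by
          gcongr
          · simp
          · exact pow_le_one₀ (abs_nonneg _) (abs_sin_le_one θ)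
      _ ≤ (x ^ 2) ^ n := by
          rw [div_one, mul_one]
          exact pow_le_pow_of_le_one (sq_nonneg x) hx2.le (Nat.le_succ n)
  · rw [uIoc_of_le (by positivity)] at hθ
    have hsin : 0 < sin θ := sin_pos_of_pos_of_lt_pi hθ.1 (by linarith [hθ.2, pi_pos])
    have hy : |x ^ 2 * sin θ ^ 2| < 1 := by
      rw [abs_of_nonneg (by positivity)]
      nlinarith [sin_sq_le_one θ]
    refine ((hasSum_log_one_add_of_abs_lt_one hy).div_const (sin θ)).congr_fun fun n => ?_
    field_simp
    ring

lemma integral_pow_mul_arccos (m : ℕ) :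
    ∫ x in (0:ℝ)..1, x ^ m * arccos x = (∫ θ in (0:ℝ)..(π / 2), cos θ ^ (m + 1)) / (m + 1) := by
  have hsubst : ∫ x in (0:ℝ)..1, x ^ m * arccos x =
      ∫ θ in (0:ℝ)..(π / 2), θ * (cos θ ^ m * sin θ) := by
    have h := integral_comp_mul_deriv (a := π / 2) (b := 0) (g := fun x => x ^ m * arccos x)
      (fun θ _ => hasDerivAt_cos θ) (by fun_prop) (by fun_prop)
    rw [cos_pi_div_two, cos_zero] at h
    rw [← h, integral_symm, ← intervalIntegral.integral_neg]
    refine integral_congr fun θ hθ => ?_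
    rw [uIcc_of_le (by positivity)] at hθ
    simp only [Function.comp_apply, arccos_cos hθ.1 (by linarith [hθ.2, pi_pos])]
    ring
  have hderiv (θ : ℝ) : HasDerivAt (fun θ => -cos θ ^ (m + 1) / (m + 1)) (cos θ ^ m * sin θ) θ := by
    refine (((hasDerivAt_cos θ).pow (m + 1)).neg.div_const _).congr_deriv ?_
    field_simp
    push_cast
    ring
  rw [hsubst, integral_mul_deriv_eq_deriv_mul (fun θ _ => hasDerivAt_id' θ) (fun θ _ => hderiv θ)
    (by simp) (Continuous.intervalIntegrable (by fun_prop) _ _)]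
  simp [intervalIntegral.integral_neg, intervalIntegral.integral_div, neg_div]

lemma integral_sin_pow_odd_mul_integral_cos_pow_even (n : ℕ) :
    (∫ θ in (0:ℝ)..(π / 2), sin θ ^ (2 * n + 1)) * (∫ θ in (0:ℝ)..(π / 2), cos θ ^ (2 * n + 2))
      = π / (4 * (n + 1)) := by
  induction n with
  | zero =>
    norm_num [integral_sin, integral_cos_sq]
    ring
  | succ n ih =>
    rw [show 2 * (n + 1) + 1 = 2 * n + 1 + 2 by ring, show 2 * (n + 1) + 2 = 2 * n + 2 + 2 by ring,
      integral_sin_pow, integral_cos_pow]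
    simp only [sin_zero, cos_zero, sin_pi_div_two, cos_pi_div_two, zero_pow (Nat.succ_ne_zero _),
      zero_mul]
    calc _ = (2 * n + 2) / (2 * n + 4) * ((∫ θ in (0:ℝ)..(π / 2), sin θ ^ (2 * n + 1)) *
          ∫ θ in (0:ℝ)..(π / 2), cos θ ^ (2 * n + 2)) := by
          push_cast
          field_simp
          ring
      _ = _ := by
          rw [ih]
          push_cast
          field_simp
          ring

lemma integral_sin_pow_mul_integral_pow_mul_arccos (n : ℕ) :
    (∫ θ in (0:ℝ)..(π / 2), sin θ ^ (2 * n + 1)) * ∫ x in (0:ℝ)..1, x ^ (2 * n + 1) * arccos x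
      = π / (8 * (n + 1) ^ 2) := by
  rw [integral_pow_mul_arccos, mul_div_assoc', integral_sin_pow_odd_mul_integral_cos_pow_even]
  push_cast
  field_simp
  ring

lemma hasSum_integral_arsinh_sq_mul_arccos_div :
    HasSum (fun n : ℕ => π / 8 * ((-1) ^ n / (n + 1) ^ 3))
      (∫ x in (0:ℝ)..1, arsinh x ^ 2 * arccos x / x) := by
  set c : ℕ → ℝ := fun n => (∫ θ in (0:ℝ)..(π / 2), sin θ ^ (2 * n + 1)) / (n + 1)
  have hc (n : ℕ) : 0 ≤ c n := by
    refine div_nonneg (integral_nonneg (by positivity) fun θ hθ => pow_nonneg ?_ _) (by positivity)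
    exact sin_nonneg_of_nonneg_of_le_pi hθ.1 (by linarith [hθ.2, pi_pos])
  have hcJ (n : ℕ) : c n * ∫ x in (0:ℝ)..1, x ^ (2 * n + 1) * arccos x = π / (8 * (n + 1) ^ 3) := by
    rw [div_mul_eq_mul_div, integral_sin_pow_mul_integral_pow_mul_arccos]
    field_simp
  refine (hasSum_intervalIntegral_of_summable_integral_norm zero_le_one
    (F := fun n x => (-1) ^ n * c n * (x ^ (2 * n + 1) * arccos x))
    (fun n => Continuous.intervalIntegrable (by fun_prop) _ _) ?summable
    fun x hx => ?pointwise).congr_fun fun n => ?term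
  case term =>
    rw [integral_const_mul, mul_assoc, hcJ]
    field_simp
  case summable =>
    refine ((summable_one_div_nat_add_one_pow (by norm_num : 1 < 3)).mul_left (π / 8)).congr
      fun n => ?_
    have hnorm : ∀ x ∈ uIcc (0:ℝ) 1, ‖(-1) ^ n * c n * (x ^ (2 * n + 1) * arccos x)‖
        = c n * (x ^ (2 * n + 1) * arccos x) := by
      intro x hx
      rw [uIcc_of_le zero_le_one] at hx
      rw [norm_mul, norm_mul, norm_pow, norm_neg, norm_one, one_pow, one_mul,
        Real.norm_of_nonneg (hc n),
        Real.norm_of_nonneg (mul_nonneg (pow_nonneg hx.1 _) (arccos_nonneg x))]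
    rw [integral_congr hnorm, integral_const_mul, hcJ]
    field_simp
  case pointwise =>
    have hx1 : |x| < 1 := by rw [abs_of_pos hx.1]; exact hx.2
    refine (((hasSum_arsinh_sq hx1).mul_right (arccos x)).div_const x).congr_fun fun n => ?_
    simp only [c]
    field_simp [hx.1.ne']
    ring

open Real in
theorem zeta_three_eq_arsinh_sq_arccos_integral :
    riemannZeta 3 =
      ((32 / (3 * π)) * ∫ x in (0:ℝ)..1, (arsinh x) ^ 2 * arccos x / x : ℝ) := by
  rw [← hasSum_integral_arsinh_sq_mul_arccos_div.tsum_eq, tsum_mul_left,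
    tsum_neg_one_pow_div_add_one_pow (by norm_num : 1 < 3), show (3 : ℂ) = (3 : ℕ) by norm_num,
    riemannZeta_natCast_eq_tsum (by norm_num)]
  push_cast
  field_simp
  ring
end

section
/- ∑_{n=0}^∞ (−1)ⁿ/(2n+1)³ = ∫₀¹ (arsinh x · arccos x)/x dx, where the integral is taken over the real interval [0,1]. -/
/-!
For `|x| < 1`, integrating the binomial series of `(1 + t²)^(-1/2)` termwise gives
`arsinh x = ∑ cₙ x^(2n+1) / (2n+1)` with `cₙ = binom(-1/2, n)`, so the integrand is
`∑ cₙ / (2n+1) · x^(2n) arccos x` on `(0, 1)`. Since `|cₙ| ≤ 1` and every `x^(2n) arccos x` is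
nonnegative, the absolute integrals add up to `∑ 1 / (2n+1)³ < ∞` and the series can be integrated
termwise. Substituting `x = cos θ` and integrating by parts turns `∫₀¹ x^(2n) arccos x` into
`Wₙ / (2n+1)` with the Wallis integral `Wₙ = ∫₀^{π/2} cos^(2n+1)`, and `(2n+1) cₙ Wₙ = (-1)ⁿ`
because `cₙ` and `Wₙ` obey reciprocal two-term recursions.
-/

open Real MeasureTheory

theorem Ring.choose_succ_right_eq {K : Type*} [Field K] [CharZero K] (a : K) (n : ℕ) :
    Ring.choose a (n + 1) * (n + 1) = Ring.choose a n * (a - n) := by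
  rw [Ring.choose_eq_smul, Ring.choose_eq_smul, descPochhammer_succ_right, Polynomial.smeval_mul]
  simp only [Nat.factorial_succ, Nat.cast_mul, Nat.cast_add, Nat.cast_one, mul_inv_rev,
    Polynomial.smeval_sub, Polynomial.smeval_X, pow_one, Polynomial.smeval_natCast, pow_zero,
    nsmul_eq_mul, mul_one, smul_eq_mul]
  field_simp

lemma choose_neg_half_succ (n : ℕ) :
    Ring.choose (-1 / 2 : ℝ) (n + 1) =
      -((2 * n + 1) / (2 * n + 2)) * Ring.choose (-1 / 2 : ℝ) n := by
  have h := Ring.choose_succ_right_eq (-1 / 2 : ℝ) n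
  rw [← eq_div_iff (by positivity)] at h
  rw [h]
  field_simp
  ring

lemma abs_choose_neg_half_le_one (n : ℕ) : |Ring.choose (-1 / 2 : ℝ) n| ≤ 1 := by
  induction n with
  | zero => simp
  | succ n ih =>
    rw [choose_neg_half_succ, abs_mul, abs_neg, abs_of_nonneg (by positivity)]
    exact mul_le_one₀ ((div_le_one (by positivity)).2 (by linarith)) (abs_nonneg _) ih

lemma hasSum_inv_sqrt_one_add_sq {x : ℝ} (hx : |x| < 1) :
    HasSum (fun n : ℕ => Ring.choose (-1 / 2 : ℝ) n * x ^ (2 * n)) (√(1 + x ^ 2))⁻¹ := by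
  have hx2 : x ^ 2 ∈ Metric.eball (0 : ℝ) 1 := by
    rw [Metric.mem_eball, edist_zero_right, enorm_pow, Real.enorm_eq_ofReal_abs]
    exact pow_lt_one₀ zero_le (ENNReal.ofReal_lt_one.2 hx) two_ne_zero
  have hsum := (one_add_rpow_hasFPowerSeriesOnBall_zero (a := -1 / 2)).hasSum hx2
  rw [zero_add, neg_div, rpow_neg (by positivity), ← sqrt_eq_rpow, ← neg_div] at hsum
  simpa [binomialSeries, FormalMultilinearSeries.coeff_ofScalars, pow_mul', mul_comm] using hsum

lemma integral_inv_sqrt_one_add_sq (x : ℝ) : ∫ t in (0 : ℝ)..x, (√(1 + t ^ 2))⁻¹ = arsinh x := by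
  have hcont : Continuous fun t : ℝ => (√(1 + t ^ 2))⁻¹ := by
    fun_prop (disch := intro t; positivity)
  rw [intervalIntegral.integral_eq_sub_of_hasDerivAt (fun t _ => hasDerivAt_arsinh t)
    (hcont.intervalIntegrable 0 x), arsinh_zero, sub_zero]

lemma hasSum_arsinh {x : ℝ} (hx : |x| < 1) :
    HasSum (fun n : ℕ => Ring.choose (-1 / 2 : ℝ) n * x ^ (2 * n + 1) / (2 * n + 1))
      (arsinh x) := by
  have hterm (n : ℕ) : ∫ t in (0 : ℝ)..x, Ring.choose (-1 / 2 : ℝ) n * t ^ (2 * n) =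
      Ring.choose (-1 / 2 : ℝ) n * x ^ (2 * n + 1) / (2 * n + 1) := by
    simp [integral_pow, mul_div_assoc]
  simp only [← hterm, ← integral_inv_sqrt_one_add_sq]
  have habs {t : ℝ} (ht : t ∈ Set.uIoc 0 x) : |t| ≤ |x| := by
    simpa using Set.abs_sub_left_of_mem_uIcc (Set.uIoc_subset_uIcc ht)
  refine intervalIntegral.hasSum_integral_of_dominated_convergence (fun n _ => |x| ^ (2 * n))
    (fun n => by fun_prop) (fun n => .of_forall fun t ht => ?_)
    (.of_forall fun t _ => ?_) intervalIntegrable_const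
    (.of_forall fun t ht => hasSum_inv_sqrt_one_add_sq ((habs ht).trans_lt hx))
  · rw [norm_mul, norm_pow, Real.norm_eq_abs, Real.norm_eq_abs]
    exact (mul_le_of_le_one_left (by positivity) (abs_choose_neg_half_le_one n)).trans
      (pow_le_pow_left₀ (abs_nonneg t) (habs ht) _)
  · simpa [pow_mul] using summable_geometric_of_lt_one (by positivity)
      (pow_lt_one₀ (abs_nonneg x) hx two_ne_zero)

lemma integral_pow_mul_arccos_eq_integral_mul_sin_mul_cos_pow (k : ℕ) :
    ∫ x in (0 : ℝ)..1, x ^ k * arccos x = ∫ θ in (0 : ℝ)..(π / 2), θ * sin θ * cos θ ^ k := by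
  have hsubst := intervalIntegral.integral_comp_mul_deriv (a := 0) (b := π / 2)
    (fun θ _ => hasDerivAt_cos θ) continuous_sin.neg.continuousOn
    (by fun_prop : Continuous fun x : ℝ => x ^ k * arccos x)
  rw [cos_zero, cos_pi_div_two] at hsubst
  rw [intervalIntegral.integral_symm, ← hsubst, ← intervalIntegral.integral_neg]
  refine intervalIntegral.integral_congr fun θ hθ => ?_
  rw [Set.uIcc_of_le (by positivity)] at hθ
  simp only [Function.comp_apply, arccos_cos hθ.1 (hθ.2.trans (by linarith [pi_pos]))]
  ring

lemma integral_mul_sin_mul_cos_pow (k : ℕ) :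
    ∫ θ in (0 : ℝ)..(π / 2), θ * sin θ * cos θ ^ k =
      (∫ θ in (0 : ℝ)..(π / 2), cos θ ^ (k + 1)) / (k + 1) := by
  have hv (θ : ℝ) : HasDerivAt (fun t => -cos t ^ (k + 1) / (k + 1)) (sin θ * cos θ ^ k) θ := by
    refine (((hasDerivAt_cos θ).fun_pow (k + 1)).neg.div_const ((k : ℝ) + 1)).congr_deriv ?_
    field_simp
    simp only [Nat.cast_add, Nat.cast_one, add_tsub_cancel_right]
    ring
  have hcont : Continuous fun θ => sin θ * cos θ ^ k := by fun_prop
  have hparts := intervalIntegral.integral_mul_deriv_eq_deriv_mul (a := 0) (b := π / 2)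
    (fun θ _ => hasDerivAt_id' θ) (fun θ _ => hv θ) intervalIntegrable_const
    (hcont.intervalIntegrable _ _)
  simp only [mul_assoc] at hparts ⊢
  rw [hparts]
  simp [intervalIntegral.integral_div, intervalIntegral.integral_neg, neg_div]

lemma integral_cos_pow_add_two_zero_pi_div_two (k : ℕ) :
    ∫ θ in (0 : ℝ)..(π / 2), cos θ ^ (k + 2) =
      (k + 1) / (k + 2) * ∫ θ in (0 : ℝ)..(π / 2), cos θ ^ k := by
  simp [integral_cos_pow]

lemma odd_mul_choose_neg_half_mul_integral_cos_pow (n : ℕ) :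
    (2 * n + 1) * Ring.choose (-1 / 2 : ℝ) n * ∫ θ in (0 : ℝ)..(π / 2), cos θ ^ (2 * n + 1) =
      (-1) ^ n := by
  induction n with
  | zero => simp [integral_cos]
  | succ n ih =>
    rw [show 2 * (n + 1) + 1 = 2 * n + 1 + 2 by ring, integral_cos_pow_add_two_zero_pi_div_two,
      choose_neg_half_succ]
    generalize Ring.choose (-1 / 2 : ℝ) n = c at ih ⊢
    generalize ∫ θ in (0 : ℝ)..(π / 2), cos θ ^ (2 * n + 1) = W at ih ⊢
    push_cast
    field_simp
    linear_combination (-(2 * n + 2) * (2 * n + 3) : ℝ) * ih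

lemma choose_neg_half_mul_integral_pow_mul_arccos (n : ℕ) :
    Ring.choose (-1 / 2 : ℝ) n * ∫ x in (0 : ℝ)..1, x ^ (2 * n) * arccos x =
      (-1) ^ n / (2 * n + 1) ^ 2 := by
  rw [integral_pow_mul_arccos_eq_integral_mul_sin_mul_cos_pow, integral_mul_sin_mul_cos_pow,
    ← odd_mul_choose_neg_half_mul_integral_cos_pow]
  generalize Ring.choose (-1 / 2 : ℝ) n = c
  push_cast
  field_simp

lemma integral_choose_neg_half_mul_pow_mul_arccos (n : ℕ) :
    ∫ x in (0 : ℝ)..1, Ring.choose (-1 / 2 : ℝ) n / (2 * n + 1) * (x ^ (2 * n) * arccos x) =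
      (-1) ^ n / (2 * n + 1) ^ 3 := by
  rw [intervalIntegral.integral_const_mul, div_mul_eq_mul_div,
    choose_neg_half_mul_integral_pow_mul_arccos]
  field_simp

lemma integral_norm_choose_neg_half_mul_pow_mul_arccos (n : ℕ) :
    ∫ x in (0 : ℝ)..1, ‖Ring.choose (-1 / 2 : ℝ) n / (2 * n + 1) * (x ^ (2 * n) * arccos x)‖ =
      1 / (2 * n + 1) ^ 3 := by
  have hnonneg (x : ℝ) : 0 ≤ x ^ (2 * n) * arccos x :=
    mul_nonneg (by rw [pow_mul]; positivity) (arccos_nonneg x)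
  have hnorm (x : ℝ) :
      ‖Ring.choose (-1 / 2 : ℝ) n / (2 * n + 1) * (x ^ (2 * n) * arccos x)‖ =
        ‖Ring.choose (-1 / 2 : ℝ) n / (2 * n + 1)‖ * (x ^ (2 * n) * arccos x) := by
    rw [norm_mul, Real.norm_of_nonneg (hnonneg x)]
  simp only [hnorm]
  rw [intervalIntegral.integral_const_mul,
    ← Real.norm_of_nonneg (intervalIntegral.integral_nonneg zero_le_one fun x _ => hnonneg x),
    ← norm_mul, ← intervalIntegral.integral_const_mul,
    integral_choose_neg_half_mul_pow_mul_arccos]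
  simp [abs_of_pos (by positivity : (0 : ℝ) < 2 * n + 1)]

lemma summable_one_div_two_mul_add_one_pow {p : ℕ} (hp : 1 < p) :
    Summable fun n : ℕ => 1 / (2 * n + 1 : ℝ) ^ p := by
  have hinj : Function.Injective fun n : ℕ => 2 * n + 1 := fun a b h => by simpa using h
  simpa [Function.comp_def] using (Real.summable_one_div_nat_pow.2 hp).comp_injective hinj

lemma hasSum_arsinh_mul_arccos_div {x : ℝ} (hx : |x| < 1) (hx0 : x ≠ 0) :
    HasSum (fun n : ℕ => Ring.choose (-1 / 2 : ℝ) n / (2 * n + 1) * (x ^ (2 * n) * arccos x))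
      (arsinh x * arccos x / x) := by
  have hterm (n : ℕ) : Ring.choose (-1 / 2 : ℝ) n / (2 * n + 1) * (x ^ (2 * n) * arccos x) =
      Ring.choose (-1 / 2 : ℝ) n * x ^ (2 * n + 1) / (2 * n + 1) * (arccos x / x) := by
    field_simp
    ring
  simpa only [hterm, mul_div_assoc'] using (hasSum_arsinh hx).mul_right (arccos x / x)

open Real in
theorem alt_odd_cubes_sum_eq_arsinh_integral :
    ∑' n : ℕ, (-1 : ℝ) ^ n / (2 * n + 1 : ℝ) ^ 3 =
      ∫ x in (0:ℝ)..1, arsinh x * arccos x / x := by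
  set F : ℕ → ℝ → ℝ := fun n x =>
    Ring.choose (-1 / 2 : ℝ) n / (2 * n + 1) * (x ^ (2 * n) * arccos x)
  have hIoo {f : ℝ → ℝ} : ∫ x in (0 : ℝ)..1, f x = ∫ x in Set.Ioo (0 : ℝ) 1, f x := by
    rw [intervalIntegral.integral_of_le zero_le_one, integral_Ioc_eq_integral_Ioo]
  have hF_int (n : ℕ) : IntegrableOn (F n) (Set.Ioo 0 1) :=
    (by fun_prop : Continuous (F n)).integrableOn_Icc.mono_set Set.Ioo_subset_Icc_self
  have hF_norm : Summable fun n => ∫ x in Set.Ioo (0 : ℝ) 1, ‖F n x‖ := by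
    simpa only [← hIoo, F, integral_norm_choose_neg_half_mul_pow_mul_arccos]
      using summable_one_div_two_mul_add_one_pow (by norm_num : 1 < 3)
  calc ∑' n : ℕ, (-1 : ℝ) ^ n / (2 * n + 1 : ℝ) ^ 3
      = ∑' n, ∫ x in Set.Ioo (0 : ℝ) 1, F n x := by
        simp only [← hIoo, F, integral_choose_neg_half_mul_pow_mul_arccos]
    _ = ∫ x in Set.Ioo (0 : ℝ) 1, ∑' n, F n x :=
        integral_tsum_of_summable_integral_norm hF_int hF_norm
    _ = ∫ x in (0 : ℝ)..1, arsinh x * arccos x / x := by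
        rw [hIoo]
        refine setIntegral_congr_fun measurableSet_Ioo fun x hx => ?_
        exact (hasSum_arsinh_mul_arccos_div (by rw [abs_of_pos hx.1]; exact hx.2) hx.1.ne').tsum_eq
end

section
/- ∫₀¹ ((arcsin x)²)/x dx = (π²/4)·log 2 − (7/8)·ζ(3), where the integral is taken over the real interval [0,1]. -/
/-!
Substituting `x = sin θ` gives `∫₀^{π/2} θ² cos θ / sin θ dθ`; integrating by parts, with
`θ² log (2 sin θ)` vanishing at `0` and equal to `π²/4 · log 2` at `π/2`, turns this into
`π²/4 · log 2 - 2 ∫₀^{π/2} θ log (2 sin θ) dθ`.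

For `|r| < 1` the Fourier series `-½ log (1 - 2r cos 2θ + r²) = ∑ rᵏ cos (2kθ) / k` converges
uniformly, so integrating it against `θ` over `[0, π/2]` gives a power series in `r` with
coefficients `(1 - (-1)ᵏ) / (2k³)`. Letting `r → 1⁻` (dominated convergence on the integral,
Abel's theorem on the series) yields `∫₀^{π/2} θ log (2 sin θ) dθ = ½ ∑_{k odd} 1/k³ = 7/16 · ζ(3)`.
-/

open Real Set Filter Topology MeasureTheory intervalIntegral Interval

theorem integral_comp_sin {E : Type*} [NormedAddCommGroup E] [NormedSpace ℝ E] (g : ℝ → E) :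
    ∫ x in (0)..1, g x = ∫ θ in (0)..(π / 2), cos θ • g (sin θ) := by
  have hIcc : Icc 0 (π / 2) ⊆ Icc (-(π / 2)) (π / 2) := Icc_subset_Icc (by linarith [pi_pos]) le_rfl
  have himage : sin '' Icc 0 (π / 2) = Icc 0 1 := by
    simpa using continuous_sin.continuousOn.image_Icc_of_monotoneOn (by positivity)
      (strictMonoOn_sin.monotoneOn.mono hIcc)
  rw [integral_of_le zero_le_one, integral_of_le (by positivity), ← integral_Icc_eq_integral_Ioc,
    ← integral_Icc_eq_integral_Ioc, ← himage, integral_image_eq_integral_abs_deriv_smul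
      measurableSet_Icc (fun θ _ => (hasDerivAt_sin θ).hasDerivWithinAt) (injOn_sin.mono hIcc)]
  refine setIntegral_congr_fun measurableSet_Icc fun θ hθ => ?_
  rw [abs_of_nonneg (cos_nonneg_of_mem_Icc (hIcc hθ))]

-- Also where `sin x = 0`: both sides are then `0` by the convention `y / 0 = 0`.
theorem div_sinc (x : ℝ) : x / sinc x = x ^ 2 / sin x := by
  rcases eq_or_ne x 0 with rfl | hx
  · simp
  rw [sinc_of_ne_zero hx, div_div_eq_mul_div, sq]

theorem sinc_ne_zero_of_mem_Ioo {x : ℝ} (hx : x ∈ Ioo (-π) π) : sinc x ≠ 0 := by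
  rcases eq_or_ne x 0 with rfl | h
  · simp
  rw [sinc_of_ne_zero h]
  exact div_ne_zero (fun hs => h ((sin_eq_zero_iff_of_lt_of_lt hx.1 hx.2).mp hs)) h

theorem continuousOn_sq_mul_cos_div_sin :
    ContinuousOn (fun θ => θ ^ 2 * cos θ / sin θ) (Ioo (-π) π) := by
  have h : (fun θ => θ ^ 2 * cos θ / sin θ) = fun θ => θ / sinc θ * cos θ := by
    ext θ; rw [div_sinc, mul_div_right_comm]
  rw [h]
  exact (continuousOn_id.div continuous_sinc.continuousOn fun _ => sinc_ne_zero_of_mem_Ioo).mul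
    continuous_cos.continuousOn

theorem tendsto_sq_mul_log_two_mul_sin_nhdsGT_zero :
    Tendsto (fun θ => θ ^ 2 * log (2 * sin θ)) (𝓝[>] 0) (𝓝 0) := by
  have hcont : ContinuousAt (fun θ => θ / sinc θ / 2 * (2 * sin θ * log (2 * sin θ))) 0 :=
    ((continuousAt_id.div continuous_sinc.continuousAt (by simp)).div_const 2).mul
      (continuous_mul_log.comp (by fun_prop)).continuousAt
  have h : Tendsto (fun θ => θ / sinc θ / 2 * (2 * sin θ * log (2 * sin θ))) (𝓝[>] 0) (𝓝 0) := by
    simpa using hcont.tendsto.mono_left nhdsWithin_le_nhds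
  refine h.congr' ?_
  filter_upwards [Ioo_mem_nhdsGT pi_pos] with θ hθ
  have hsin := (sin_pos_of_pos_of_lt_pi hθ.1 hθ.2).ne'
  rw [div_sinc]
  field_simp

theorem intervalIntegrable_log_two_mul_sin {a b : ℝ} :
    IntervalIntegrable (fun θ => log (2 * sin θ)) volume a b :=
  MeromorphicOn.intervalIntegrable_log (f := fun θ => 2 * sin θ)
    (AnalyticOnNhd.meromorphicOn fun _ _ => by fun_prop)

theorem integral_sq_mul_cos_div_sin :
    ∫ θ in (0)..(π / 2), θ ^ 2 * cos θ / sin θ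
      = π ^ 2 / 4 * log 2 - 2 * ∫ θ in (0)..(π / 2), θ * log (2 * sin θ) := by
  have hderiv : ∀ θ ∈ Ioo 0 (π / 2), HasDerivAt (fun t => t ^ 2 * log (2 * sin t))
      (2 * (θ * log (2 * sin θ)) + θ ^ 2 * cos θ / sin θ) θ := fun θ hθ => by
    have hsin := (sin_pos_of_pos_of_lt_pi hθ.1 (by linarith [hθ.2, pi_pos])).ne'
    refine ((hasDerivAt_pow 2 θ).mul
      (((hasDerivAt_sin θ).const_mul 2).log (mul_ne_zero two_ne_zero hsin))).congr_deriv ?_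
    field_simp
    ring
  have hint₁ : IntervalIntegrable (fun θ => θ * log (2 * sin θ)) volume 0 (π / 2) :=
    intervalIntegrable_log_two_mul_sin.continuousOn_mul continuousOn_id
  have hint₂ : IntervalIntegrable (fun θ => θ ^ 2 * cos θ / sin θ) volume 0 (π / 2) := by
    refine (continuousOn_sq_mul_cos_div_sin.mono ?_).intervalIntegrable
    rw [uIcc_of_le (by positivity)]
    exact Icc_subset_Ioo (by linarith [pi_pos]) (by linarith [pi_pos])
  have hπ : Tendsto (fun t => t ^ 2 * log (2 * sin t)) (𝓝[<] (π / 2)) (𝓝 (π ^ 2 / 4 * log 2)) := by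
    have hcont : ContinuousAt (fun t => t ^ 2 * log (2 * sin t)) (π / 2) :=
      continuousAt_id.pow 2 |>.mul <| ContinuousAt.log (by fun_prop) (by simp)
    convert hcont.tendsto.mono_left nhdsWithin_le_nhds using 2
    norm_num [div_pow]
  have hFTC := integral_eq_sub_of_hasDerivAt_of_tendsto (by positivity) hderiv
    ((hint₁.const_mul 2).add hint₂) tendsto_sq_mul_log_two_mul_sin_nhdsGT_zero hπ
  rw [integral_add (hint₁.const_mul 2) hint₂, intervalIntegral.integral_const_mul] at hFTC
  linarith

theorem hasSum_pow_mul_cos_div {r : ℝ} (hr : |r| < 1) (φ : ℝ) :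
    HasSum (fun k : ℕ => r ^ k * cos (k * φ) / k) (-log (1 - 2 * r * cos φ + r ^ 2) / 2) := by
  set z : ℂ := r * Complex.exp (φ * Complex.I)
  have hz : ‖z‖ < 1 := by simpa [z, Complex.norm_exp_ofReal_mul_I] using hr
  have hre (k : ℕ) : (z ^ k / k).re = r ^ k * cos (k * φ) / k := by
    rw [mul_pow, ← Complex.exp_nat_mul, ← mul_assoc, ← Complex.ofReal_natCast,
      ← Complex.ofReal_mul, ← Complex.ofReal_pow, Complex.div_ofReal_re, Complex.re_ofReal_mul,
      Complex.exp_ofReal_mul_I_re]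
  have hnormSq : Complex.normSq (1 - z) = 1 - 2 * r * cos φ + r ^ 2 := by
    simp only [z, Complex.normSq_apply, Complex.sub_re, Complex.sub_im, Complex.one_re,
      Complex.one_im, Complex.re_ofReal_mul, Complex.im_ofReal_mul, Complex.exp_ofReal_mul_I_re,
      Complex.exp_ofReal_mul_I_im]
    linear_combination r ^ 2 * sin_sq_add_cos_sq φ
  have h := Complex.hasSum_re (Complex.hasSum_taylorSeries_neg_log hz)
  simp only [hre, Complex.neg_re, Complex.log_re, Complex.norm_def, hnormSq] at h
  rwa [log_sqrt (by rw [← hnormSq]; exact Complex.normSq_nonneg _), ← neg_div] at h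

theorem integral_mul_cos_nat_mul_two_mul_div (k : ℕ) :
    ∫ θ in (0)..(π / 2), θ * (cos (k * (2 * θ)) / k) = ((-1) ^ k - 1) / (4 * k ^ 3) := by
  rcases eq_or_ne k 0 with rfl | hk
  · simp
  have hk' : (k : ℝ) ≠ 0 := Nat.cast_ne_zero.mpr hk
  have hderiv (θ : ℝ) : HasDerivAt
      (fun t => t * sin (k * (2 * t)) / (2 * k ^ 2) + cos (k * (2 * t)) / (4 * k ^ 3))
      (θ * (cos (k * (2 * θ)) / k)) θ := by
    have hlin : HasDerivAt (fun t : ℝ => k * (2 * t)) (2 * k) θ := by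
      simpa [mul_comm] using ((hasDerivAt_id θ).const_mul 2).const_mul (k : ℝ)
    have := ((((hasDerivAt_id θ).mul ((hasDerivAt_sin _).comp θ hlin)).div_const (2 * k ^ 2)).add
      (((hasDerivAt_cos _).comp θ hlin).div_const (4 * k ^ 3)))
    refine this.congr_deriv ?_
    simp only [Function.comp_apply, id]
    field_simp
    ring
  rw [integral_eq_sub_of_hasDerivAt (fun θ _ => hderiv θ)
    (Continuous.intervalIntegrable (by fun_prop) _ _)]
  have hpi : (k : ℝ) * (2 * (π / 2)) = k * π := by ring
  simp only [hpi, sin_nat_mul_pi, cos_nat_mul_pi, mul_zero, sin_zero, cos_zero]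
  ring

theorem abs_cos_div_natCast_le_one (x : ℝ) (k : ℕ) : |cos x / k| ≤ 1 := by
  rcases k.eq_zero_or_pos with rfl | hk
  · simp
  rw [abs_div, Nat.abs_cast]
  exact div_le_one_of_le₀ ((abs_cos_le_one x).trans (Nat.one_le_cast.mpr hk)) k.cast_nonneg

theorem hasSum_integral_mul_log_one_sub_two_mul_cos_add_sq {r : ℝ} (hr : |r| < 1) :
    HasSum (fun k : ℕ => (1 - (-1) ^ k) / (2 * k ^ 3) * r ^ k)
      (∫ θ in (0)..(π / 2), θ * log (1 - 2 * r * cos (2 * θ) + r ^ 2)) := by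
  have hterm (θ : ℝ) : HasSum (fun k : ℕ => -2 * r ^ k * (θ * (cos (k * (2 * θ)) / k)))
      (θ * log (1 - 2 * r * cos (2 * θ) + r ^ 2)) := by
    have h := (hasSum_pow_mul_cos_div hr (2 * θ)).mul_left (-2 * θ)
    rw [show -2 * θ * (-log (1 - 2 * r * cos (2 * θ) + r ^ 2) / 2)
      = θ * log (1 - 2 * r * cos (2 * θ) + r ^ 2) by ring] at h
    exact h.congr_fun fun k => by ring
  have hbound (k : ℕ) : ∀ᵐ θ, θ ∈ Ι 0 (π / 2) →
      ‖-2 * r ^ k * (θ * (cos (k * (2 * θ)) / k))‖ ≤ π * |r| ^ k := by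
    refine .of_forall fun θ hθ => ?_
    rw [uIoc_of_le (by positivity)] at hθ
    have hθ' : |θ| ≤ π / 2 := by rw [abs_of_pos hθ.1]; exact hθ.2
    simp only [norm_mul, norm_neg, norm_pow, Real.norm_eq_abs, abs_two]
    calc 2 * |r| ^ k * (|θ| * |cos (k * (2 * θ)) / k|) ≤ 2 * |r| ^ k * (π / 2 * 1) := by
          gcongr; exact abs_cos_div_natCast_le_one _ _
      _ = π * |r| ^ k := by ring
  have h := intervalIntegral.hasSum_integral_of_dominated_convergence (fun k _ => π * |r| ^ k)
    (fun k => (Continuous.aestronglyMeasurable (by fun_prop))) hbound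
    (.of_forall fun _ _ => (summable_geometric_of_lt_one (abs_nonneg r) hr).mul_left π)
    intervalIntegrable_const (.of_forall fun θ _ => hterm θ)
  refine h.congr_fun fun k => ?_
  rw [intervalIntegral.integral_const_mul, integral_mul_cos_nat_mul_two_mul_div]
  rcases k.eq_zero_or_pos with rfl | hk
  · simp
  field_simp
  ring

theorem two_sub_two_mul_cos_two_mul (θ : ℝ) : 2 - 2 * cos (2 * θ) = (2 * sin θ) ^ 2 := by
  rw [cos_two_mul, cos_sq']
  ring

theorem abs_log_one_sub_two_mul_cos_add_sq_le {r φ : ℝ} (hr₀ : 1 / 4 ≤ r) (hr₁ : r ≤ 1)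
    (hφ : 0 < 2 - 2 * cos φ) :
    |log (1 - 2 * r * cos φ + r ^ 2)| ≤ log 4 + |log (2 - 2 * cos φ)| := by
  have hdecomp : 1 - 2 * r * cos φ + r ^ 2 = (1 - r) ^ 2 + r * (2 - 2 * cos φ) := by ring
  have hlower : (2 - 2 * cos φ) / 4 ≤ 1 - 2 * r * cos φ + r ^ 2 := by
    rw [hdecomp]; nlinarith [sq_nonneg (1 - r)]
  have hupper : 1 - 2 * r * cos φ + r ^ 2 ≤ 4 := by
    nlinarith [neg_one_le_cos φ, cos_le_one φ]
  have hpos : 0 < 1 - 2 * r * cos φ + r ^ 2 := (div_pos hφ four_pos).trans_le hlower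
  have hlog_lower := log_le_log (div_pos hφ four_pos) hlower
  rw [log_div hφ.ne' four_ne_zero] at hlog_lower
  rw [abs_le]
  constructor
  · linarith [neg_abs_le (log (2 - 2 * cos φ))]
  · linarith [log_le_log hpos hupper, abs_nonneg (log (2 - 2 * cos φ))]

theorem tendsto_integral_mul_log_one_sub_two_mul_cos_add_sq :
    Tendsto (fun r => ∫ θ in (0)..(π / 2), θ * log (1 - 2 * r * cos (2 * θ) + r ^ 2)) (𝓝[<] 1)
      (𝓝 (∫ θ in (0)..(π / 2), θ * log (2 - 2 * cos (2 * θ)))) := by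
  have hpos : ∀ θ ∈ Ι 0 (π / 2), 0 < 2 - 2 * cos (2 * θ) := fun θ hθ => by
    rw [uIoc_of_le (by positivity)] at hθ
    rw [two_sub_two_mul_cos_two_mul]
    have := sin_pos_of_pos_of_lt_pi hθ.1 (by linarith [pi_pos, hθ.2])
    positivity
  have hlog_int : IntervalIntegrable (fun θ => log (2 - 2 * cos (2 * θ))) volume 0 (π / 2) :=
    MeromorphicOn.intervalIntegrable_log (f := fun θ => 2 - 2 * cos (2 * θ))
      (AnalyticOnNhd.meromorphicOn fun _ _ => by fun_prop)
  refine intervalIntegral.tendsto_integral_filter_of_dominated_convergence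
    (fun θ => θ * (log 4 + |log (2 - 2 * cos (2 * θ))|))
    (.of_forall fun r => (by fun_prop : Measurable _).aestronglyMeasurable) ?_
    ((intervalIntegrable_const.add hlog_int.abs).continuousOn_mul continuousOn_id) ?_
  · filter_upwards [Ioo_mem_nhdsLT (by norm_num : (1 / 4 : ℝ) < 1)] with r hr
    refine .of_forall fun θ hθ => ?_
    have hθ₀ : 0 < θ := by rw [uIoc_of_le (by positivity)] at hθ; exact hθ.1
    rw [norm_mul, Real.norm_eq_abs, Real.norm_eq_abs, abs_of_pos hθ₀]
    exact mul_le_mul_of_nonneg_left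
      (abs_log_one_sub_two_mul_cos_add_sq_le hr.1.le hr.2.le (hpos θ hθ)) hθ₀.le
  · refine .of_forall fun θ hθ => tendsto_nhdsWithin_of_tendsto_nhds ?_
    have hval : (1 : ℝ) - 2 * 1 * cos (2 * θ) + 1 ^ 2 = 2 - 2 * cos (2 * θ) := by ring
    have hcont : ContinuousAt (fun r => θ * log (1 - 2 * r * cos (2 * θ) + r ^ 2)) 1 :=
      continuousAt_const.mul (ContinuousAt.log (by fun_prop) (hval ▸ (hpos θ hθ).ne'))
    simpa only [hval] using hcont.tendsto

theorem hasSum_one_sub_neg_one_pow_div_pow {p : ℕ} (hp : 1 < p) :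
    HasSum (fun n : ℕ => (1 - (-1) ^ n) / (n : ℝ) ^ p)
      (2 * (1 - 1 / 2 ^ p) * ∑' n : ℕ, 1 / (n : ℝ) ^ p) := by
  set f : ℕ → ℝ := fun n => 1 / (n : ℝ) ^ p
  have hf : Summable f := Real.summable_one_div_nat_pow.mpr hp
  have heven : HasSum (fun k => f (2 * k)) (∑' n, f n / 2 ^ p) :=
    (hf.div_const _).hasSum.congr_fun fun k => by simp only [f]; push_cast; ring
  have hodd_summable : Summable fun k => f (2 * k + 1) :=
    hf.comp_injective fun a b h => by omega
  have hodd : ∑' k, f (2 * k + 1) = (1 - 1 / 2 ^ p) * ∑' n, f n := by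
    have := (heven.even_add_odd hodd_summable.hasSum).tsum_eq
    rw [tsum_div_const] at this
    linear_combination -this
  rw [show 2 * (1 - 1 / 2 ^ p) * ∑' n, f n = 0 + 2 * ∑' k, f (2 * k + 1) by rw [hodd]; ring]
  refine HasSum.even_add_odd (hasSum_zero.congr_fun fun k => by simp [pow_mul]) ?_
  exact (hodd_summable.hasSum.mul_left 2).congr_fun fun k => by
    simp only [f, pow_succ, pow_mul]; norm_num; ring

theorem integral_mul_log_two_mul_sin :
    ∫ θ in (0)..(π / 2), θ * log (2 * sin θ) = 7 / 16 * ∑' n : ℕ, 1 / (n : ℝ) ^ 3 := by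
  have hcoeff : HasSum (fun k : ℕ => (1 - (-1) ^ k) / (2 * (k : ℝ) ^ 3))
      (7 / 8 * ∑' n : ℕ, 1 / (n : ℝ) ^ 3) := by
    have h := (hasSum_one_sub_neg_one_pow_div_pow (p := 3) (by norm_num)).div_const 2
    rw [show (2 * (1 - 1 / 2 ^ 3) * ∑' n : ℕ, 1 / (n : ℝ) ^ 3) / 2
      = 7 / 8 * ∑' n : ℕ, 1 / (n : ℝ) ^ 3 by ring] at h
    exact h.congr_fun fun k => by ring
  have habel := Real.tendsto_tsum_powerSeries_nhdsWithin_lt hcoeff.tendsto_sum_nat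
  have hseries : ∀ᶠ r in 𝓝[<] 1, ∫ θ in (0)..(π / 2), θ * log (1 - 2 * r * cos (2 * θ) + r ^ 2)
      = ∑' k : ℕ, (1 - (-1) ^ k) / (2 * (k : ℝ) ^ 3) * r ^ k := by
    filter_upwards [Ioo_mem_nhdsLT (by norm_num : (-1 : ℝ) < 1)] with r hr
    exact (hasSum_integral_mul_log_one_sub_two_mul_cos_add_sq (abs_lt.mpr hr)).tsum_eq.symm
  have hlimit := tendsto_nhds_unique
    (tendsto_integral_mul_log_one_sub_two_mul_cos_add_sq.congr' hseries) habel
  simp only [two_sub_two_mul_cos_two_mul, log_pow, Nat.cast_ofNat] at hlimit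
  rw [show (fun θ => θ * (2 * log (2 * sin θ))) = fun θ => 2 * (θ * log (2 * sin θ)) by
    ext θ; ring, intervalIntegral.integral_const_mul] at hlimit
  linarith

open Real in
theorem arcsin_sq_div_x_integral :
    ((∫ x in (0:ℝ)..1, (arcsin x) ^ 2 / x : ℝ) : ℂ) =
      (π ^ 2 / 4) * Real.log 2 - (7 / 8 : ℂ) * riemannZeta 3 := by
  have hsubst : ∫ x in (0:ℝ)..1, arcsin x ^ 2 / x = ∫ θ in (0)..(π / 2), θ ^ 2 * cos θ / sin θ := by
    rw [integral_comp_sin]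
    refine integral_congr fun θ hθ => ?_
    rw [uIcc_of_le (by positivity)] at hθ
    rw [smul_eq_mul, arcsin_sin (by linarith [hθ.1, pi_pos]) hθ.2]
    ring
  have hzeta : riemannZeta 3 = ((∑' n : ℕ, 1 / (n : ℝ) ^ 3 : ℝ) : ℂ) := by
    rw [show (3 : ℂ) = (3 : ℕ) by norm_num, zeta_nat_eq_tsum_of_gt_one (by norm_num),
      Complex.ofReal_tsum]
    push_cast
    rfl
  rw [hsubst, integral_sq_mul_cos_div_sin, integral_mul_log_two_mul_sin, hzeta]
  push_cast
  ring
end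

section
/- For every real y with |y| ≤ 1, (arcsin y)² = (1/2) · ∑_{n=1}^∞ ((2n)!!/(2n−1)!!) · y^{2n}/n², where (2n)!! = 2n·(2n−2)···2 and (2n−1)!! = (2n−1)·(2n−3)···1. -/
/-! With `r n = (2n)‼ / (2n+1)‼`, the recurrence `r (n+1) (2n+3) = r n (2n+2)` says that
`S x = ∑ r n x^(2n+1)` solves `(1 - x²) S' - x S = 1`; hence `√(1 - x²) S` and `arcsin` have the
same derivative on `(-1, 1)` and agree at `0`. The claimed series is `∑ r n / (n+1) x^(2n+2)`,
whose derivative `2 S = 2 arcsin / √(1 - x²)` is that of `arcsin²`. Finally `r n ≤ (n+1)^(-1/2)`,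
so the series converges uniformly on `[-1, 1]` and the identity extends to the endpoints. -/

open Real Nat Set Function

noncomputable def doubleFactorialRatio (n : ℕ) : ℝ := ((2 * n)‼ : ℝ) / ((2 * n + 1)‼ : ℝ)

lemma doubleFactorialRatio_pos (n : ℕ) : 0 < doubleFactorialRatio n := by
  unfold doubleFactorialRatio
  positivity

lemma doubleFactorialRatio_zero : doubleFactorialRatio 0 = 1 := by
  simp [doubleFactorialRatio]

lemma doubleFactorialRatio_succ_mul (n : ℕ) :
    doubleFactorialRatio (n + 1) * (2 * n + 3) = doubleFactorialRatio n * (2 * n + 2) := by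
  rw [doubleFactorialRatio, doubleFactorialRatio, mul_add_one, add_right_comm,
    doubleFactorial_add_two, doubleFactorial_add_two]
  push_cast
  field_simp
  ring

lemma sq_doubleFactorialRatio_mul_le_one (n : ℕ) :
    doubleFactorialRatio n ^ 2 * (n + 1) ≤ 1 := by
  induction n with
  | zero => simp [doubleFactorialRatio_zero]
  | succ n ih =>
    have hrec := doubleFactorialRatio_succ_mul n
    -- the step reduces to `4 (n+1) (n+2) ≤ (2n+3)²`
    have hsq : doubleFactorialRatio (n + 1) ^ 2 * (2 * n + 3) ^ 2
        = doubleFactorialRatio n ^ 2 * (n + 1) * (4 * (n + 1)) := by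
      rw [← mul_pow, hrec]
      ring
    push_cast
    nlinarith [sq_nonneg (doubleFactorialRatio (n + 1)), sq_nonneg ((n : ℝ) + 1)]

lemma doubleFactorialRatio_le_one (n : ℕ) : doubleFactorialRatio n ≤ 1 := by
  nlinarith [sq_doubleFactorialRatio_mul_le_one n, doubleFactorialRatio_pos n,
    sq_nonneg (doubleFactorialRatio n), (n.cast_nonneg : (0 : ℝ) ≤ n)]

lemma summable_doubleFactorialRatio_div_succ :
    Summable fun n : ℕ => doubleFactorialRatio n / (n + 1) := by
  have hp : Summable fun n : ℕ => (((n + 1 : ℕ) : ℝ) ^ (3 / 2 : ℝ))⁻¹ :=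
    (summable_nat_add_iff 1).2 (Real.summable_nat_rpow_inv.2 (by norm_num))
  refine .of_nonneg_of_le (fun n => by have := doubleFactorialRatio_pos n; positivity)
    (fun n => ?_) hp
  have ha : (0 : ℝ) < n + 1 := by positivity
  have hpow : (n + 1 : ℝ) ^ (3 / 2 : ℝ) = (n + 1) * √(n + 1) := by
    rw [show (3 / 2 : ℝ) = 1 + 1 / 2 by norm_num, rpow_add ha, rpow_one, sqrt_eq_rpow]
  have hsqrt : doubleFactorialRatio n * √(n + 1) ≤ 1 := by
    have := sq_doubleFactorialRatio_mul_le_one n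
    rw [← sq_le_one_iff₀ (by have := doubleFactorialRatio_pos n; positivity), mul_pow,
      sq_sqrt ha.le]
    exact this
  push_cast
  rw [hpow, div_le_iff₀ ha]
  field_simp
  exact hsqrt

section PowerSeries

variable {k : ℕ → ℕ}

lemma summable_succ_mul_pow_comp (hk : Injective k) {r : ℝ} (hr : ‖r‖ < 1) :
    Summable fun n => ((k n : ℝ) + 1) * r ^ k n := by
  have h : Summable fun m : ℕ => ((m : ℝ) + 1) * r ^ m := by
    simpa [pow_one, add_mul] using
      (summable_pow_mul_geometric_of_norm_lt_one 1 hr).add (summable_geometric_of_norm_lt_one hr)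
  exact h.comp_injective hk

lemma summable_mul_pow_comp (hk : Injective k) {c : ℕ → ℝ} {C : ℝ}
    (hc : ∀ n, |c n| ≤ C * (k n + 1)) {x : ℝ} (hx : |x| < 1) :
    Summable fun n => c n * x ^ k n := by
  refine .of_norm_bounded
    ((summable_succ_mul_pow_comp hk (r := |x|) (by rwa [norm_abs_eq_norm])).mul_left C)
    fun n => ?_
  rw [norm_mul, norm_pow, Real.norm_eq_abs, Real.norm_eq_abs, ← mul_assoc]
  gcongr
  exact hc n

lemma hasDerivAt_tsum_mul_pow_succ (hk : Injective k) {c : ℕ → ℝ} {C : ℝ}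
    (hc : ∀ n, |c n| ≤ C) {x : ℝ} (hx : |x| < 1) :
    HasDerivAt (fun y => ∑' n, c n * y ^ (k n + 1)) (∑' n, c n * (k n + 1) * x ^ k n) x := by
  obtain ⟨ρ, hxρ, hρ⟩ := exists_between hx
  have hρ₀ : 0 ≤ ρ := (abs_nonneg x).trans hxρ.le
  refine hasDerivAt_tsum_of_isPreconnected (t := Ioo (-ρ) ρ)
    (g := fun n y => c n * y ^ (k n + 1)) (g' := fun n y => c n * (k n + 1) * y ^ k n)
    ((summable_succ_mul_pow_comp hk (r := ρ) (by rwa [Real.norm_of_nonneg hρ₀])).mul_left C)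
    isOpen_Ioo isPreconnected_Ioo (fun n y _ => ?_) (fun n y hy => ?_)
    (y₀ := 0) (by simp [(abs_nonneg x).trans_lt hxρ]) (by simp) (abs_lt.1 hxρ)
  · refine ((hasDerivAt_pow (k n + 1) y).const_mul (c n)).congr_deriv ?_
    rw [Nat.add_sub_cancel]
    push_cast
    ring
  · have hy : |y| ≤ ρ := (abs_lt.2 hy).le
    rw [norm_mul, norm_mul, norm_pow, Real.norm_eq_abs, Real.norm_eq_abs, Real.norm_eq_abs,
      abs_of_nonneg (by positivity : (0 : ℝ) ≤ k n + 1), ← mul_assoc]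
    have hC : 0 ≤ C := (abs_nonneg _).trans (hc 0)
    gcongr
    exact hc n

end PowerSeries

lemma IsOpen.eqOn_of_hasDerivAt {𝕜 G : Type*} [RCLike 𝕜] [NormedAddCommGroup G]
    [NormedSpace 𝕜 G] {s : Set 𝕜} (hs : IsOpen s) (hs' : IsPreconnected s) {f g f' : 𝕜 → G}
    (hf : ∀ x ∈ s, HasDerivAt f (f' x) x) (hg : ∀ x ∈ s, HasDerivAt g (f' x) x) {a : 𝕜}
    (ha : a ∈ s) (hfg : f a = g a) : EqOn f g s :=
  hs.eqOn_of_deriv_eq hs' (fun x hx => (hf x hx).differentiableAt.differentiableWithinAt)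
    (fun x hx => (hg x hx).differentiableAt.differentiableWithinAt)
    (fun x hx => (hf x hx).deriv.trans (hg x hx).deriv.symm) ha hfg

noncomputable def arcsinDivSqrtSeries (x : ℝ) : ℝ :=
  ∑' n, doubleFactorialRatio n * x ^ (2 * n + 1)

lemma hasDerivAt_arcsinDivSqrtSeries {x : ℝ} (hx : |x| < 1) :
    HasDerivAt arcsinDivSqrtSeries
      (∑' n, doubleFactorialRatio n * (2 * n + 1) * x ^ (2 * n)) x := by
  have h := hasDerivAt_tsum_mul_pow_succ (mul_right_injective₀ (two_ne_zero' ℕ))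
    (fun n => (abs_of_pos (doubleFactorialRatio_pos n)).trans_le (doubleFactorialRatio_le_one n))
    hx
  exact_mod_cast h

lemma arcsinDivSqrtSeries_ode {x : ℝ} (hx : |x| < 1) :
    (1 - x ^ 2) * ∑' n, doubleFactorialRatio n * (2 * n + 1) * x ^ (2 * n)
      - x * arcsinDivSqrtSeries x = 1 := by
  set A : ℕ → ℝ := fun n => doubleFactorialRatio n * (2 * n + 1) * x ^ (2 * n) with hA
  set B : ℕ → ℝ := fun n => doubleFactorialRatio n * x ^ (2 * n + 1) with hB
  have hAs : Summable A := by
    refine summable_mul_pow_comp (mul_right_injective₀ (two_ne_zero' ℕ)) (C := 1) (fun n => ?_) hx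
    rw [abs_of_pos (by have := doubleFactorialRatio_pos n; positivity)]
    push_cast
    nlinarith [doubleFactorialRatio_le_one n]
  have hBs : Summable B := by
    refine summable_mul_pow_comp (k := fun n => 2 * n + 1)
      (fun _ _ h => by dsimp only at h; omega) (C := 1) (fun n => ?_) hx
    rw [abs_of_pos (doubleFactorialRatio_pos n)]
    have := doubleFactorialRatio_le_one n
    push_cast
    linarith
  have hstep : ∀ n, A (n + 1) = x ^ 2 * A n + x * B n := fun n => by
    have hrec := doubleFactorialRatio_succ_mul n
    simp only [hA, hB]
    push_cast
    linear_combination x ^ (2 * n + 2) * hrec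
  have hshift := hAs.tsum_eq_zero_add
  rw [tsum_congr hstep, hAs.mul_left _ |>.tsum_add (hBs.mul_left _), tsum_mul_left,
    tsum_mul_left] at hshift
  have hA0 : A 0 = 1 := by simp [hA, doubleFactorialRatio_zero]
  rw [arcsinDivSqrtSeries]
  linear_combination hshift + hA0

lemma arcsin_eq_sqrt_mul_arcsinDivSqrtSeries :
    EqOn arcsin (fun x => √(1 - x ^ 2) * arcsinDivSqrtSeries x) (Ioo (-1) 1) := by
  refine isOpen_Ioo.eqOn_of_hasDerivAt isPreconnected_Ioo
    (fun x hx => hasDerivAt_arcsin hx.1.ne' hx.2.ne) (fun x hx => ?_)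
    (by simp : (0 : ℝ) ∈ Ioo (-1) 1) (by simp [arcsinDivSqrtSeries])
  have hx' : |x| < 1 := abs_lt.2 hx
  have hpos : 0 < 1 - x ^ 2 := by nlinarith [hx.1, hx.2]
  have hsqrt := ((hasDerivAt_pow 2 x).const_sub 1).sqrt hpos.ne'
  refine (hsqrt.mul (hasDerivAt_arcsinDivSqrtSeries hx')).congr_deriv ?_
  have hsq := sq_sqrt hpos.le
  have hode := arcsinDivSqrtSeries_ode hx'
  set T := ∑' n, doubleFactorialRatio n * (2 * n + 1) * x ^ (2 * n)
  field_simp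
  norm_num
  linear_combination 2 * hode + 2 * T * hsq

noncomputable def arcsinSqSeries (x : ℝ) : ℝ :=
  ∑' n, doubleFactorialRatio n / (n + 1) * x ^ (2 * n + 1 + 1)

lemma hasDerivAt_arcsinSqSeries {x : ℝ} (hx : |x| < 1) :
    HasDerivAt arcsinSqSeries (2 * arcsinDivSqrtSeries x) x := by
  have hc (n : ℕ) : |doubleFactorialRatio n / (n + 1)| ≤ 1 := by
    have := doubleFactorialRatio_pos n
    rw [abs_of_pos (by positivity), div_le_one (by positivity)]
    linarith [doubleFactorialRatio_le_one n, (n.cast_nonneg : (0 : ℝ) ≤ n)]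
  refine (hasDerivAt_tsum_mul_pow_succ (k := fun n => 2 * n + 1)
    (fun _ _ h => by dsimp only at h; omega) hc hx).congr_deriv ?_
  rw [arcsinDivSqrtSeries, ← tsum_mul_left]
  refine tsum_congr fun n => ?_
  field_simp
  push_cast
  ring

lemma eqOn_arcsin_sq_arcsinSqSeries_Ioo :
    EqOn (fun x => arcsin x ^ 2) arcsinSqSeries (Ioo (-1) 1) := by
  refine isOpen_Ioo.eqOn_of_hasDerivAt isPreconnected_Ioo (fun x hx => ?_)
    (fun x hx => hasDerivAt_arcsinSqSeries (abs_lt.2 hx))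
    (by simp : (0 : ℝ) ∈ Ioo (-1) 1) (by simp [arcsinSqSeries])
  have hpos : 0 < √(1 - x ^ 2) := sqrt_pos.2 (by nlinarith [hx.1, hx.2])
  refine ((hasDerivAt_arcsin hx.1.ne' hx.2.ne).pow 2).congr_deriv ?_
  rw [arcsin_eq_sqrt_mul_arcsinDivSqrtSeries hx]
  field_simp
  ring

lemma continuousOn_arcsinSqSeries : ContinuousOn arcsinSqSeries (Icc (-1) 1) := by
  refine continuousOn_tsum (fun n => by fun_prop) summable_doubleFactorialRatio_div_succ
    fun n x hx => ?_
  have := doubleFactorialRatio_pos n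
  rw [norm_mul, norm_pow, Real.norm_of_nonneg (by positivity)]
  exact mul_le_of_le_one_right (by positivity)
    (pow_le_one₀ (norm_nonneg x) (by rwa [Real.norm_eq_abs, abs_le]))

lemma eqOn_arcsin_sq_arcsinSqSeries :
    EqOn (fun x => arcsin x ^ 2) arcsinSqSeries (Icc (-1) 1) :=
  eqOn_arcsin_sq_arcsinSqSeries_Ioo.of_subset_closure (by fun_prop) continuousOn_arcsinSqSeries
    Ioo_subset_Icc_self (closure_Ioo (by norm_num)).ge

lemma doubleFactorial_two_mul_succ_div (n : ℕ) :
    ((2 * (n + 1))‼ : ℝ) / ((2 * (n + 1) - 1)‼ : ℝ) = (2 * n + 2) * doubleFactorialRatio n := by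
  rw [doubleFactorialRatio, show 2 * (n + 1) - 1 = 2 * n + 1 by omega, mul_add_one,
    doubleFactorial_add_two]
  push_cast
  ring

open Real Nat in
theorem arcsin_sq_series (y : ℝ) (hy : |y| ≤ 1) :
    (arcsin y) ^ 2 =
      (1 / 2) * ∑' n : ℕ,
        ((2 * (n + 1))‼ : ℝ) / ((2 * (n + 1) - 1)‼ : ℝ) *
          y ^ (2 * (n + 1)) / (n + 1 : ℝ) ^ 2 := by
  have hterm (n : ℕ) : ((2 * (n + 1))‼ : ℝ) / ((2 * (n + 1) - 1)‼ : ℝ) *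
      y ^ (2 * (n + 1)) / (n + 1 : ℝ) ^ 2
      = 2 * (doubleFactorialRatio n / (n + 1) * y ^ (2 * n + 1 + 1)) := by
    rw [doubleFactorial_two_mul_succ_div]
    field_simp
    ring
  rw [tsum_congr hterm, tsum_mul_left, ← mul_assoc, one_div_mul_cancel two_ne_zero, one_mul]
  exact eqOn_arcsin_sq_arcsinSqSeries (abs_le.1 hy)
end

section
/- For every real y with |y| ≤ 1, (arsinh y)² = (1/2) · ∑_{n=1}^∞ (−1)^{n−1} · ((2n)!!/(2n−1)!!) · y^{2n}/n², where (2n)!! = 2n·(2n−2)···2 and (2n−1)!! = (2n−1)·(2n−3)···1. -/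
/-!
Put `b n = (-1)^n (2n)‼ / (2n+1)‼`. The recurrence `(2n+3) b (n+1) = -(2n+2) b n` says precisely
that `G y = ∑ b n y^(2n+1)` solves `(1 + y²) G' + y G = 1` on `(-1, 1)`, an equation also solved by
`arsinh y / √(1 + y²)`; both vanish at `0`, so they agree. Integrating
`(arsinh² y)' = 2 arsinh y / √(1 + y²) = 2 G y` termwise gives `arsinh² y = ∑ b n / (n+1) y^(2n+2)`
on `(-1, 1)`. Since `b n ^ 2 (n+1) ≤ 1`, this series converges uniformly on `[-1, 1]`, and the
identity extends to the endpoints by continuity.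
-/

open Real Nat Set

section PowerSeries

variable {a : ℕ → ℝ} {C x : ℝ}

theorem summable_natCast_mul_pow_sub_one {r : ℝ} (hr : |r| < 1) :
    Summable fun n : ℕ => (n : ℝ) * r ^ (n - 1) := by
  refine (summable_nat_add_iff 1).1 ?_
  refine ((summable_pow_mul_geometric_of_norm_lt_one 1 hr).add
    (summable_geometric_of_abs_lt_one hr)).congr fun n => ?_
  push_cast
  ring_nf

theorem summable_mul_pow_of_abs_le (ha : ∀ n, |a n| ≤ C) (hx : |x| < 1) :
    Summable fun n => a n * x ^ n :=
  .of_norm_bounded ((summable_geometric_of_lt_one (abs_nonneg x) hx).mul_left C) fun n => by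
    rw [norm_mul, norm_pow, Real.norm_eq_abs, Real.norm_eq_abs]
    exact mul_le_mul_of_nonneg_right (ha n) (by positivity)

theorem summable_mul_natCast_mul_pow_sub_one_of_abs_le (ha : ∀ n, |a n| ≤ C) (hx : |x| < 1) :
    Summable fun n : ℕ => a n * (n * x ^ (n - 1)) :=
  .of_norm_bounded ((summable_natCast_mul_pow_sub_one (r := |x|) (by rwa [abs_abs])).mul_left C)
    fun n => by
      rw [norm_mul, norm_mul, norm_pow, Real.norm_eq_abs, Real.norm_eq_abs, Real.norm_eq_abs,
        Nat.abs_cast]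
      exact mul_le_mul_of_nonneg_right (ha n) (by positivity)

theorem hasDerivAt_tsum_mul_pow_add (ha : ∀ n, |a n| ≤ C) (k : ℕ) (hx : |x| < 1) :
    HasDerivAt (fun z => ∑' n, a n * z ^ (n + k))
      (∑' n, a n * ((n + k : ℕ) * x ^ (n + k - 1))) x := by
  obtain ⟨r, hxr, hr1⟩ := exists_between hx
  have hr : |r| < 1 := abs_lt.2 ⟨by linarith [abs_nonneg x], hr1⟩
  have hu : Summable fun n => C * ((n + k : ℕ) * r ^ (n + k - 1)) :=
    ((summable_nat_add_iff k).2 (summable_natCast_mul_pow_sub_one hr)).mul_left C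
  refine hasDerivAt_tsum_of_isPreconnected (g := fun n z => a n * z ^ (n + k))
    (g' := fun n z => a n * ((n + k : ℕ) * z ^ (n + k - 1))) hu Metric.isOpen_ball
    (convex_ball 0 r).isPreconnected (fun n z _ => ?_) (fun n z hz => ?_) (y₀ := x)
    (by simpa using hxr) ?_ (by simpa using hxr)
  · simpa using (hasDerivAt_pow (n + k) z).const_mul (a n)
  · rw [mem_ball_zero_iff, Real.norm_eq_abs] at hz
    rw [norm_mul, norm_mul, norm_pow, Real.norm_eq_abs, Real.norm_eq_abs, Real.norm_eq_abs,
      Nat.abs_cast]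
    exact mul_le_mul (ha n) (by gcongr) (by positivity) ((abs_nonneg _).trans (ha n))
  · refine ((summable_mul_pow_of_abs_le ha hx).mul_left (x ^ k)).congr fun n => ?_
    ring

theorem continuousOn_tsum_mul_pow (ha : Summable fun n => |a n|) (e : ℕ → ℕ) :
    ContinuousOn (fun z => ∑' n, a n * z ^ e n) (Icc (-1) 1) :=
  continuousOn_tsum (fun n => (continuous_const.mul (continuous_pow _)).continuousOn) ha
    fun n z hz => by
      rw [norm_mul, norm_pow, Real.norm_eq_abs, Real.norm_eq_abs]
      exact mul_le_of_le_one_right (abs_nonneg _) (pow_le_one₀ (abs_nonneg z) (abs_le.2 hz))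

end PowerSeries

theorem eqOn_Ioo_of_hasDerivAt {f g f' : ℝ → ℝ} {a b x₀ : ℝ}
    (hf : ∀ x ∈ Ioo a b, HasDerivAt f (f' x) x) (hg : ∀ x ∈ Ioo a b, HasDerivAt g (f' x) x)
    (hx₀ : x₀ ∈ Ioo a b) (h : f x₀ = g x₀) : EqOn f g (Ioo a b) :=
  isOpen_Ioo.eqOn_of_deriv_eq isPreconnected_Ioo
    (fun x hx => (hf x hx).differentiableAt.differentiableWithinAt)
    (fun x hx => (hg x hx).differentiableAt.differentiableWithinAt)
    (fun x hx => (hf x hx).deriv.trans (hg x hx).deriv.symm) hx₀ h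

noncomputable def arsinhDivSqrtCoeff (n : ℕ) : ℝ := (-1) ^ n * ((2 * n)‼ : ℝ) / ((2 * n + 1)‼ : ℝ)

theorem arsinhDivSqrtCoeff_zero : arsinhDivSqrtCoeff 0 = 1 := by
  simp [arsinhDivSqrtCoeff]

theorem arsinhDivSqrtCoeff_succ (n : ℕ) :
    (2 * n + 3) * arsinhDivSqrtCoeff (n + 1) = -((2 * n + 2) * arsinhDivSqrtCoeff n) := by
  have hodd : ((2 * n + 1)‼ : ℝ) ≠ 0 := by positivity
  rw [arsinhDivSqrtCoeff, arsinhDivSqrtCoeff, show 2 * (n + 1) = 2 * n + 2 by ring,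
    show 2 * n + 2 + 1 = 2 * n + 1 + 2 by ring, Nat.doubleFactorial_add_two,
    Nat.doubleFactorial_add_two]
  push_cast
  field_simp
  ring

theorem arsinhDivSqrtCoeff_sq_mul_le_one (n : ℕ) :
    arsinhDivSqrtCoeff n ^ 2 * (n + 1) ≤ 1 := by
  induction n with
  | zero => simp [arsinhDivSqrtCoeff_zero]
  | succ n ih =>
    have hsq : (2 * n + 3 : ℝ) ^ 2 * (arsinhDivSqrtCoeff (n + 1) ^ 2 * (n + 1 + 1)) =
        4 * (n + 1) * (n + 2) * (arsinhDivSqrtCoeff n ^ 2 * (n + 1)) := by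
      linear_combination (n + 2 : ℝ) * ((2 * n + 3) * arsinhDivSqrtCoeff (n + 1) -
        (2 * n + 2) * arsinhDivSqrtCoeff n) * arsinhDivSqrtCoeff_succ n
    push_cast
    refine le_of_mul_le_mul_left ?_ (by positivity : (0 : ℝ) < (2 * n + 3) ^ 2)
    rw [hsq, mul_one]
    nlinarith [mul_le_mul_of_nonneg_left ih (by positivity : (0 : ℝ) ≤ 4 * (n + 1) * (n + 2))]

theorem abs_arsinhDivSqrtCoeff_le (n : ℕ) : |arsinhDivSqrtCoeff n| ≤ (√(n + 1))⁻¹ := by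
  rw [← one_div, le_div_iff₀ (by positivity), ← sqrt_sq_eq_abs, ← sqrt_mul (sq_nonneg _)]
  exact sqrt_le_one.2 (arsinhDivSqrtCoeff_sq_mul_le_one n)

theorem abs_arsinhDivSqrtCoeff_le_one (n : ℕ) : |arsinhDivSqrtCoeff n| ≤ 1 :=
  (abs_arsinhDivSqrtCoeff_le n).trans (inv_le_one_of_one_le₀ (one_le_sqrt.2 (by simp)))

theorem summable_abs_arsinhDivSqrtCoeff_div :
    Summable fun n : ℕ => |arsinhDivSqrtCoeff n / (n + 1)| := by
  refine ((Real.summable_one_div_nat_add_rpow 1 (3 / 2)).2 (by norm_num)).of_nonneg_of_le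
    (fun n => abs_nonneg _) fun n => ?_
  have hn : (0 : ℝ) < n + 1 := by positivity
  have hpow : |(n : ℝ) + 1| ^ (3 / 2 : ℝ) = (n + 1) * √(n + 1) := by
    rw [abs_of_pos hn, show (3 / 2 : ℝ) = 1 + 1 / 2 by norm_num, rpow_add hn, rpow_one,
      sqrt_eq_rpow]
  rw [hpow, abs_div, abs_of_pos hn, one_div, mul_inv, div_eq_inv_mul]
  exact mul_le_mul_of_nonneg_left (abs_arsinhDivSqrtCoeff_le n) (by positivity)

theorem two_mul_arsinhDivSqrtCoeff_div (n : ℕ) :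
    2 * (arsinhDivSqrtCoeff n / (n + 1)) =
      (-1) ^ n * (((2 * (n + 1))‼ : ℝ) / ((2 * (n + 1) - 1)‼ : ℝ)) / (n + 1 : ℝ) ^ 2 := by
  have hodd : ((2 * n + 1)‼ : ℝ) ≠ 0 := by positivity
  rw [arsinhDivSqrtCoeff, show 2 * (n + 1) - 1 = 2 * n + 1 by omega,
    show 2 * (n + 1) = 2 * n + 2 by ring, Nat.doubleFactorial_add_two]
  push_cast
  field_simp

noncomputable def arsinhDivSqrtSeries (x : ℝ) : ℝ := ∑' n, arsinhDivSqrtCoeff n * x ^ n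

noncomputable def arsinhSqSeries (x : ℝ) : ℝ :=
  ∑' n, arsinhDivSqrtCoeff n / (n + 1) * x ^ (n + 1)

section

variable {x y : ℝ}

theorem hasDerivAt_arsinhDivSqrtSeries (hx : |x| < 1) :
    HasDerivAt arsinhDivSqrtSeries (∑' n, arsinhDivSqrtCoeff n * (n * x ^ (n - 1))) x := by
  have h := hasDerivAt_tsum_mul_pow_add abs_arsinhDivSqrtCoeff_le_one 0 hx
  simp only [add_zero] at h
  exact h

theorem hasDerivAt_arsinhSqSeries (hx : |x| < 1) :
    HasDerivAt arsinhSqSeries (arsinhDivSqrtSeries x) x := by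
  have hcoeff (n : ℕ) : |arsinhDivSqrtCoeff n / (n + 1)| ≤ 1 := by
    rw [abs_div, abs_of_pos (by positivity : (0 : ℝ) < n + 1), div_le_one (by positivity)]
    linarith [abs_arsinhDivSqrtCoeff_le_one n, (n.cast_nonneg : (0 : ℝ) ≤ n)]
  refine (hasDerivAt_tsum_mul_pow_add hcoeff 1 hx).congr_deriv (tsum_congr fun n => ?_)
  push_cast
  field_simp

theorem arsinhDivSqrtSeries_ode (hx : |x| < 1) :
    (1 + x) * (arsinhDivSqrtSeries x + 2 * x * ∑' n, arsinhDivSqrtCoeff n * (n * x ^ (n - 1))) +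
      x * arsinhDivSqrtSeries x = 1 := by
  set b := arsinhDivSqrtCoeff
  set D : ℕ → ℝ := fun n => (2 * n + 1) * b n * x ^ n
  have hS := summable_mul_pow_of_abs_le abs_arsinhDivSqrtCoeff_le_one hx
  have hS' := summable_mul_natCast_mul_pow_sub_one_of_abs_le abs_arsinhDivSqrtCoeff_le_one hx
  have hterm (n : ℕ) : b n * x ^ n + 2 * x * (b n * (n * x ^ (n - 1))) = D n := by
    rcases n with _ | n
    · simp [D]
    · simp only [D, add_tsub_cancel_right, pow_succ]
      push_cast
      ring
  have hD : arsinhDivSqrtSeries x + 2 * x * ∑' n, b n * (n * x ^ (n - 1)) = ∑' n, D n := by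
    rw [arsinhDivSqrtSeries, ← tsum_mul_left, ← hS.tsum_add (hS'.mul_left _)]
    exact tsum_congr hterm
  have hDsum : Summable D := (hS.add (hS'.mul_left (2 * x))).congr hterm
  have hshift : ∑' n, D (n + 1) = -(x * (∑' n, D n + arsinhDivSqrtSeries x)) := by
    rw [arsinhDivSqrtSeries, ← hDsum.tsum_add hS, ← tsum_mul_left, ← tsum_neg]
    refine tsum_congr fun n => ?_
    simp only [D]
    push_cast
    linear_combination x ^ (n + 1) * arsinhDivSqrtCoeff_succ n
  have hD0 : D 0 = 1 := by simp [D, b, arsinhDivSqrtCoeff_zero]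
  rw [hD]
  linear_combination hDsum.tsum_eq_zero_add + hshift + hD0

theorem hasDerivAt_mul_arsinhDivSqrtSeries_sq_mul_sqrt (hy : |y| < 1) :
    HasDerivAt (fun y => y * arsinhDivSqrtSeries (y ^ 2) * √(1 + y ^ 2)) (√(1 + y ^ 2))⁻¹ y := by
  have hy2 : |y ^ 2| < 1 := by rwa [abs_sq, sq_lt_one_iff_abs_lt_one]
  have hode := arsinhDivSqrtSeries_ode hy2
  -- abstracted so that `field_simp` below cannot reassociate inside the sum
  set S' := ∑' n, arsinhDivSqrtCoeff n * (n * (y ^ 2) ^ (n - 1))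
  have hS : HasDerivAt (fun y => arsinhDivSqrtSeries (y ^ 2)) (S' * (2 * y)) y := by
    refine ((hasDerivAt_arsinhDivSqrtSeries hy2).comp (h := fun y : ℝ => y ^ 2) y
      (hasDerivAt_pow 2 y)).congr_deriv ?_
    norm_num [S']
  have hroot : HasDerivAt (fun y => √(1 + y ^ 2)) (y / √(1 + y ^ 2)) y := by
    convert ((hasDerivAt_pow 2 y).const_add 1).sqrt (by positivity) using 1
    field_simp
    ring
  have hsq : √(1 + y ^ 2) ^ 2 = 1 + y ^ 2 := sq_sqrt (by positivity)
  refine (((hasDerivAt_id y).mul hS).mul hroot).congr_deriv ?_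
  simp only [Pi.mul_apply, id]
  field_simp
  rw [hsq]
  linear_combination hode

theorem mul_arsinhDivSqrtSeries_sq (hy : |y| < 1) :
    y * arsinhDivSqrtSeries (y ^ 2) = arsinh y / √(1 + y ^ 2) := by
  rw [eq_div_iff (by positivity)]
  exact eqOn_Ioo_of_hasDerivAt
    (fun x hx => hasDerivAt_mul_arsinhDivSqrtSeries_sq_mul_sqrt (abs_lt.2 hx))
    (fun x _ => hasDerivAt_arsinh x) (x₀ := 0) (by norm_num) (by simp) (abs_lt.1 hy)

theorem hasDerivAt_arsinhSqSeries_sq (hy : |y| < 1) :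
    HasDerivAt (fun y => arsinhSqSeries (y ^ 2)) (2 * arsinh y / √(1 + y ^ 2)) y := by
  have hy2 : |y ^ 2| < 1 := by rwa [abs_sq, sq_lt_one_iff_abs_lt_one]
  refine ((hasDerivAt_arsinhSqSeries hy2).comp (h := fun y : ℝ => y ^ 2) y
    (hasDerivAt_pow 2 y)).congr_deriv ?_
  rw [mul_div_assoc, ← mul_arsinhDivSqrtSeries_sq hy]
  norm_num
  ring

theorem arsinh_sq_eq_arsinhSqSeries_of_abs_lt (hy : |y| < 1) :
    arsinh y ^ 2 = arsinhSqSeries (y ^ 2) :=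
  eqOn_Ioo_of_hasDerivAt
    (fun x _ => ((hasDerivAt_arsinh x).pow 2).congr_deriv (by simp [div_eq_mul_inv]))
    (fun x hx => hasDerivAt_arsinhSqSeries_sq (abs_lt.2 hx))
    (x₀ := 0) (by norm_num) (by simp [arsinhSqSeries]) (abs_lt.1 hy)

theorem arsinh_sq_eq_arsinhSqSeries (hy : |y| ≤ 1) : arsinh y ^ 2 = arsinhSqSeries (y ^ 2) := by
  have hcont : ContinuousOn (fun y => arsinhSqSeries (y ^ 2)) (Icc (-1) 1) :=
    (continuousOn_tsum_mul_pow summable_abs_arsinhDivSqrtCoeff_div (· + 1)).comp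
      (continuous_pow 2).continuousOn fun y hy => ⟨by nlinarith, by nlinarith [hy.1, hy.2]⟩
  refine EqOn.of_subset_closure (fun y hy => arsinh_sq_eq_arsinhSqSeries_of_abs_lt (abs_lt.2 hy))
    (continuous_arsinh.pow 2).continuousOn hcont Ioo_subset_Icc_self
    (closure_Ioo (by norm_num)).ge (abs_le.1 hy)

end

open Real Nat in
theorem arsinh_sq_series (y : ℝ) (hy : |y| ≤ 1) :
    (arsinh y) ^ 2 =
      (1 / 2) * ∑' n : ℕ,
        (-1 : ℝ) ^ n * (((2 * (n + 1))‼ : ℝ) / ((2 * (n + 1) - 1)‼ : ℝ)) *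
          y ^ (2 * (n + 1)) / (n + 1 : ℝ) ^ 2 := by
  have hterm (n : ℕ) : (-1 : ℝ) ^ n * (((2 * (n + 1))‼ : ℝ) / ((2 * (n + 1) - 1)‼ : ℝ)) *
      y ^ (2 * (n + 1)) / (n + 1 : ℝ) ^ 2 =
      2 * (arsinhDivSqrtCoeff n / (n + 1) * (y ^ 2) ^ (n + 1)) := by
    linear_combination (-(y ^ 2) ^ (n + 1)) * two_mul_arsinhDivSqrtCoeff_div n
  rw [tsum_congr hterm, tsum_mul_left, arsinh_sq_eq_arsinhSqSeries hy, arsinhSqSeries]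
  ring
end

section
/- For every real y with |y| ≤ 1, arsinh y = ∑_{n=0}^∞ (−1)ⁿ · ((2n−1)!!/(2n)!!) · y^{2n+1}/(2n+1), where (2n)!! = 2n·(2n−2)···2 and (2n−1)!! = (2n−1)·(2n−3)···1 and (−1)!! = 0!! = 1. -/
/-!
For `|y| < 1` the binomial series gives `(1 + y²)^(-1/2) = ∑ choose(-1/2, n) y^(2n)`, and
`choose(-1/2, n) = (-1)ⁿ (2n-1)‼/(2n)‼`. Integrating termwise, the odd series has the same
derivative `(1 + y²)^(-1/2)` as `arsinh` on `(-1, 1)` and vanishes at `0`, so the two agree there.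
The bound `choose(-1/2, n)² (2n+1) ≤ 1` makes the terms `O(n^(-3/2))` uniformly on `[-1, 1]`, so
the series is continuous on the closed interval and the identity extends to `y = ±1`.
-/

open Real Nat Set

namespace Ring

theorem choose_succ_eq_mul_div {K : Type*} [Field K] [CharZero K] (a : K) (n : ℕ) :
    choose a (n + 1) = choose a n * (a - n) / (n + 1) := by
  rw [choose_eq_smul, choose_eq_smul, descPochhammer_succ_right, Polynomial.smeval_mul]
  simp only [factorial_succ, cast_mul, cast_add, cast_one, mul_inv_rev, Polynomial.smeval_sub,
    Polynomial.smeval_X, pow_one, Polynomial.smeval_natCast, pow_zero, nsmul_eq_mul, mul_one,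
    smul_eq_mul]
  field_simp

theorem choose_neg_one_half (n : ℕ) :
    choose (-1 / 2 : ℝ) n = (-1) ^ n * (((2 * n - 1)‼ : ℝ) / ((2 * n)‼ : ℝ)) := by
  induction n with
  | zero => simp
  | succ n ih =>
    have hodd : (2 * (n + 1) - 1)‼ = (2 * n + 1) * (2 * n - 1)‼ := by
      rw [show 2 * (n + 1) - 1 = 2 * n + 1 by omega, doubleFactorial_add_one]
    have heven : (2 * (n + 1))‼ = (2 * n + 2) * (2 * n)‼ := doubleFactorial_add_two (2 * n)
    have hpos : ((2 * n)‼ : ℝ) ≠ 0 := by positivity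
    rw [choose_succ_eq_mul_div, ih, hodd, heven]
    push_cast
    field_simp
    ring

theorem sq_choose_neg_one_half_mul_le (n : ℕ) : choose (-1 / 2 : ℝ) n ^ 2 * (2 * n + 1) ≤ 1 := by
  induction n with
  | zero => simp
  | succ n ih =>
    rw [choose_succ_eq_mul_div, div_pow, mul_pow, div_mul_eq_mul_div,
      div_le_one (by positivity)]
    push_cast
    have : (-1 / 2 - n : ℝ) ^ 2 * (2 * (n + 1) + 1) ≤ (2 * n + 1) * (n + 1) ^ 2 := by nlinarith
    nlinarith [sq_nonneg (choose (-1 / 2 : ℝ) n)]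

theorem abs_choose_neg_one_half_le_one (n : ℕ) : |choose (-1 / 2 : ℝ) n| ≤ 1 := by
  refine (sq_le_one_iff_abs_le_one _).1 ?_
  nlinarith [sq_choose_neg_one_half_mul_le n, sq_nonneg (choose (-1 / 2 : ℝ) n),
    (n.cast_nonneg : (0 : ℝ) ≤ n)]

end Ring

theorem Real.hasSum_choose_mul_pow_of_abs_lt_one {a x : ℝ} (hx : |x| < 1) :
    HasSum (fun n ↦ Ring.choose a n * x ^ n) ((1 + x) ^ a) := by
  have hball : (x : ℂ) ∈ Metric.eball (0 : ℂ) 1 := by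
    rw [← ENNReal.ofReal_one, Metric.eball_ofReal]; simpa using hx
  have hsum := (Complex.one_add_cpow_hasFPowerSeriesOnBall_zero (a := (a : ℂ))).hasSum hball
  simp only [binomialSeries_apply, List.ofFn_const, List.prod_replicate, zero_add,
    smul_eq_mul] at hsum
  rw [← Complex.hasSum_ofReal, Complex.ofReal_cpow (by linarith [neg_abs_le x])]
  push_cast
  exact hsum

theorem hasDerivAt_tsum_odd_pow_div {c : ℕ → ℝ} (hc : ∀ n, |c n| ≤ 1) {y : ℝ} (hy : |y| < 1) :
    HasDerivAt (fun z ↦ ∑' n : ℕ, c n * z ^ (2 * n + 1) / (2 * n + 1))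
      (∑' n : ℕ, c n * (y ^ 2) ^ n) y := by
  obtain ⟨r, hyr, hr1⟩ := exists_between hy
  have hr0 : 0 ≤ r := (abs_nonneg y).trans hyr.le
  have hterm (n : ℕ) (z : ℝ) :
      HasDerivAt (fun z ↦ c n * z ^ (2 * n + 1) / (2 * n + 1)) (c n * (z ^ 2) ^ n) z := by
    refine (((hasDerivAt_pow (2 * n + 1) z).const_mul (c n)).div_const _).congr_deriv ?_
    rw [Nat.add_sub_cancel, pow_mul]
    push_cast
    field_simp
  have hbound (n : ℕ) (z : ℝ) (hz : z ∈ Metric.ball 0 r) : ‖c n * (z ^ 2) ^ n‖ ≤ (r ^ 2) ^ n := by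
    rw [mem_ball_zero_iff, Real.norm_eq_abs] at hz
    rw [Real.norm_eq_abs, abs_mul, abs_pow, abs_pow, ← one_mul ((r ^ 2) ^ n)]
    gcongr
    exact hc n
  exact hasDerivAt_tsum_of_isPreconnected
    (summable_geometric_of_lt_one (by positivity) (by nlinarith)) Metric.isOpen_ball
    (convex_ball 0 r).isPreconnected (fun n z _ ↦ hterm n z) hbound
    (Metric.mem_ball_self ((abs_nonneg y).trans_lt hyr)) (by simp) (mem_ball_zero_iff.2 hyr)

noncomputable def arsinhSeries (y : ℝ) : ℝ :=
  ∑' n : ℕ, Ring.choose (-1 / 2 : ℝ) n * y ^ (2 * n + 1) / (2 * n + 1)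

theorem hasDerivAt_arsinhSeries {y : ℝ} (hy : |y| < 1) :
    HasDerivAt arsinhSeries (√(1 + y ^ 2))⁻¹ y := by
  have hsum := Real.hasSum_choose_mul_pow_of_abs_lt_one (a := -1 / 2)
    (x := y ^ 2) (by rw [abs_pow]; exact pow_lt_one₀ (abs_nonneg y) hy two_ne_zero)
  have hrpow : (1 + y ^ 2) ^ (-1 / 2 : ℝ) = (√(1 + y ^ 2))⁻¹ := by
    rw [neg_div, Real.rpow_neg (by positivity), Real.sqrt_eq_rpow]
  rw [← hrpow, ← hsum.tsum_eq]
  exact hasDerivAt_tsum_odd_pow_div Ring.abs_choose_neg_one_half_le_one hy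

theorem eqOn_arsinh_arsinhSeries : EqOn arsinh arsinhSeries (Ioo (-1) 1) := by
  have hderiv {y : ℝ} (hy : y ∈ Ioo (-1) 1) := hasDerivAt_arsinhSeries (abs_lt.2 hy)
  refine isOpen_Ioo.eqOn_of_deriv_eq isPreconnected_Ioo differentiable_arsinh.differentiableOn
    (fun y hy ↦ (hderiv hy).differentiableAt.differentiableWithinAt)
    (fun y hy ↦ (hasDerivAt_arsinh y).deriv.trans (hderiv hy).deriv.symm)
    (x := 0) (by norm_num) ?_
  simp [arsinhSeries]

theorem abs_arsinhSeries_term_le (n : ℕ) {x : ℝ} (hx : |x| ≤ 1) :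
    |Ring.choose (-1 / 2 : ℝ) n * x ^ (2 * n + 1) / (2 * n + 1)| ≤
      1 / |(n : ℝ) + 1| ^ (3 / 2 : ℝ) := by
  have hsq := Ring.sq_choose_neg_one_half_mul_le n
  set c := Ring.choose (-1 / 2 : ℝ) n
  have hsqrt : √((n : ℝ) + 1) ^ 2 = n + 1 := Real.sq_sqrt (by positivity)
  have hpow : |(n : ℝ) + 1| ^ (3 / 2 : ℝ) = (n + 1) * √((n : ℝ) + 1) := by
    rw [abs_of_pos (by positivity), show (3 / 2 : ℝ) = 1 + 1 / 2 by norm_num,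
      Real.rpow_add (by positivity), Real.rpow_one, Real.sqrt_eq_rpow]
  have hc : |c| * √((n : ℝ) + 1) ≤ 1 := by
    refine (pow_le_one_iff_of_nonneg (by positivity) two_ne_zero).1 ?_
    rw [mul_pow, sq_abs, hsqrt]
    nlinarith [sq_nonneg c]
  rw [hpow, abs_div, abs_mul, abs_pow, abs_of_pos (by positivity : (0 : ℝ) < 2 * n + 1),
    div_le_div_iff₀ (by positivity) (by positivity)]
  have hxpow : |x| ^ (2 * n + 1) ≤ 1 := pow_le_one₀ (abs_nonneg x) hx
  calc |c| * |x| ^ (2 * n + 1) * ((n + 1) * √((n : ℝ) + 1))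
      ≤ |c| * 1 * ((n + 1) * √((n : ℝ) + 1)) := by gcongr
    _ = (|c| * √((n : ℝ) + 1)) * (n + 1) := by ring
    _ ≤ 1 * (2 * n + 1) := by nlinarith

theorem continuousOn_arsinhSeries : ContinuousOn arsinhSeries (Icc (-1) 1) :=
  continuousOn_tsum (fun n ↦ by fun_prop)
    ((Real.summable_one_div_nat_add_rpow 1 _).2 (by norm_num))
    (fun n x hx ↦ abs_arsinhSeries_term_le n (abs_le.2 hx))

open Real Nat in
theorem arsinh_series (y : ℝ) (hy : |y| ≤ 1) :
    arsinh y =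
      ∑' n : ℕ,
        (-1 : ℝ) ^ n * (((2 * n - 1)‼ : ℝ) / ((2 * n)‼ : ℝ)) *
          y ^ (2 * n + 1) / (2 * n + 1 : ℝ) := by
  have hIcc : EqOn arsinh arsinhSeries (Icc (-1) 1) :=
    eqOn_arsinh_arsinhSeries.of_subset_closure continuous_arsinh.continuousOn
      continuousOn_arsinhSeries Ioo_subset_Icc_self (closure_Ioo (by norm_num)).ge
  simp only [hIcc (abs_le.1 hy), arsinhSeries, Ring.choose_neg_one_half]
end

section
/- The Maclaurin series of arcsin converges to arcsin at the endpoints as well: for every real x with |x| ≤ 1 (including x = ±1), arcsin x = ∑_{n=0}^∞ ((2n−1)!!/(2n)!!) · x^{2n+1}/(2n+1). -/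
/-!
The coefficients `(2n-1)!!/(2n)!!` are those of the binomial series of `(1 - t)^(-1/2)`, so
for `|x| < 1` the series `∑ (2n-1)!!/(2n)!! x^(2n)` sums to `1/√(1 - x²)`. Differentiating
termwise, the arcsine series has the same derivative as `arcsin` on `(-1, 1)` and agrees with it
at `0`. At `x = 1` all terms are nonnegative and increase with `x`, so letting `x → 1⁻` bounds the
partial sums by `arcsin 1 = π/2` and forces the sum to be exactly `π/2`; `x = -1` follows by
oddness.
-/

open Real Nat Filter Topology Set

theorem Ring.succ_mul_multichoose_succ {K : Type*} [Field K] [CharZero K] (r : K) (n : ℕ) :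
    (n + 1) * Ring.multichoose r (n + 1) = (r + n) * Ring.multichoose r n := by
  have hsucc := Ring.factorial_nsmul_multichoose_eq_ascPochhammer r (n + 1)
  have hn := Ring.factorial_nsmul_multichoose_eq_ascPochhammer r n
  rw [Polynomial.ascPochhammer_smeval_eq_eval, ascPochhammer_succ_eval] at hsucc
  rw [Polynomial.ascPochhammer_smeval_eq_eval] at hn
  rw [← hn, Nat.factorial_succ, nsmul_eq_mul, nsmul_eq_mul] at hsucc
  push_cast at hsucc
  apply mul_left_cancel₀ (Nat.cast_ne_zero.2 n.factorial_ne_zero : (n ! : K) ≠ 0)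
  linear_combination hsucc

noncomputable def arcsinCoeff (n : ℕ) : ℝ := ((2 * n - 1)‼ : ℝ) / ((2 * n)‼ : ℝ)

lemma arcsinCoeff_nonneg (n : ℕ) : 0 ≤ arcsinCoeff n := by unfold arcsinCoeff; positivity

lemma arcsinCoeff_succ (n : ℕ) :
    (2 * n + 2) * arcsinCoeff (n + 1) = (2 * n + 1) * arcsinCoeff n := by
  have hodd : (2 * (n + 1) - 1)‼ = (2 * n + 1) * (2 * n - 1)‼ := by
    rw [show 2 * (n + 1) - 1 = 2 * n + 1 by omega, Nat.doubleFactorial_add_one]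
  have heven : (2 * (n + 1))‼ = (2 * n + 2) * (2 * n)‼ := Nat.doubleFactorial_add_two (2 * n)
  have hpos : (0 : ℝ) < (2 * n)‼ := by exact_mod_cast Nat.doubleFactorial_pos _
  simp only [arcsinCoeff, hodd, heven]
  push_cast
  field_simp

lemma multichoose_half_eq_arcsinCoeff (n : ℕ) :
    Ring.multichoose (1 / 2 : ℝ) n = arcsinCoeff n := by
  induction n with
  | zero => simp [arcsinCoeff]
  | succ n ih =>
    have h := Ring.succ_mul_multichoose_succ (1 / 2 : ℝ) n
    have hc := arcsinCoeff_succ n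
    rw [ih] at h
    apply mul_left_cancel₀ (by positivity : (2 * n + 2 : ℝ) ≠ 0)
    linear_combination 2 * h - hc

lemma hasSum_arcsinCoeff_mul_pow {t : ℝ} (ht : |t| < 1) :
    HasSum (fun n => arcsinCoeff n * t ^ n) (1 / √(1 - t)) := by
  have h := (Real.one_div_one_sub_rpow_hasFPowerSeriesOnBall_zero (1 / 2)).hasSum
    (y := t) (by simpa [Metric.mem_eball, edist_dist] using ht)
  simp only [FormalMultilinearSeries.ofScalars_apply_eq, ← Ring.multichoose_eq,
    multichoose_half_eq_arcsinCoeff, smul_eq_mul, zero_add] at h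
  rwa [Real.sqrt_eq_rpow]

noncomputable def arcsinTerm (n : ℕ) (x : ℝ) : ℝ :=
  arcsinCoeff n * x ^ (2 * n + 1) / (2 * n + 1)

lemma hasDerivAt_arcsinTerm (n : ℕ) (x : ℝ) :
    HasDerivAt (arcsinTerm n) (arcsinCoeff n * (x ^ 2) ^ n) x := by
  have h := ((hasDerivAt_pow (2 * n + 1) x).const_mul (arcsinCoeff n)).div_const (2 * n + 1 : ℝ)
  refine h.congr_deriv ?_
  rw [← pow_mul]
  push_cast
  field_simp

lemma continuous_arcsinTerm (n : ℕ) : Continuous (arcsinTerm n) := by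
  unfold arcsinTerm; fun_prop

lemma arcsinTerm_neg (n : ℕ) (x : ℝ) : arcsinTerm n (-x) = -arcsinTerm n x := by
  rw [arcsinTerm, arcsinTerm, Odd.neg_pow ⟨n, rfl⟩]
  ring

lemma arcsinTerm_nonneg {x : ℝ} (hx : 0 ≤ x) (n : ℕ) : 0 ≤ arcsinTerm n x := by
  unfold arcsinTerm; have := arcsinCoeff_nonneg n; positivity

lemma arcsinTerm_le_arcsinTerm_one {x : ℝ} (hx₀ : 0 ≤ x) (hx₁ : x ≤ 1) (n : ℕ) :
    arcsinTerm n x ≤ arcsinTerm n 1 := by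
  unfold arcsinTerm
  have := arcsinCoeff_nonneg n
  gcongr

lemma abs_arcsinTerm_le {x : ℝ} (hx : |x| ≤ 1) (n : ℕ) :
    |arcsinTerm n x| ≤ arcsinCoeff n * (x ^ 2) ^ n := by
  have hc := arcsinCoeff_nonneg n
  have hden : (1 : ℝ) ≤ 2 * n + 1 := by linarith [n.cast_nonneg (α := ℝ)]
  rw [arcsinTerm, abs_div, abs_mul, abs_of_nonneg hc,
    abs_of_pos (by positivity : (0 : ℝ) < 2 * n + 1), abs_pow, ← pow_mul,
    ← (even_two_mul n).pow_abs]
  calc arcsinCoeff n * |x| ^ (2 * n + 1) / (2 * n + 1) ≤ arcsinCoeff n * |x| ^ (2 * n + 1) :=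
        div_le_self (by positivity) hden
    _ ≤ arcsinCoeff n * |x| ^ (2 * n) :=
        mul_le_mul_of_nonneg_left (pow_le_pow_of_le_one (abs_nonneg x) hx (by omega)) hc

lemma summable_arcsinTerm {x : ℝ} (hx : |x| < 1) : Summable (arcsinTerm · x) := by
  have hsq : |x ^ 2| < 1 := by rwa [abs_sq, sq_lt_one_iff_abs_lt_one]
  exact (hasSum_arcsinCoeff_mul_pow hsq).summable.of_norm_bounded (abs_arcsinTerm_le hx.le)

lemma hasDerivAt_tsum_arcsinTerm {x : ℝ} (hx : |x| < 1) :
    HasDerivAt (fun y => ∑' n, arcsinTerm n y) (1 / √(1 - x ^ 2)) x := by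
  obtain ⟨r, hxr, hr1⟩ := exists_between hx
  have hr0 : 0 < r := (abs_nonneg x).trans_lt hxr
  have hr : |r ^ 2| < 1 := by rwa [abs_sq, sq_lt_one_iff_abs_lt_one, abs_of_pos hr0]
  have hx2 : |x ^ 2| < 1 := by rwa [abs_sq, sq_lt_one_iff_abs_lt_one]
  have hbound (n : ℕ) (y : ℝ) (hy : y ∈ Ioo (-r) r) :
      ‖arcsinCoeff n * (y ^ 2) ^ n‖ ≤ arcsinCoeff n * (r ^ 2) ^ n := by
    have := arcsinCoeff_nonneg n
    rw [Real.norm_eq_abs, abs_mul, abs_of_nonneg this, abs_pow, abs_pow, ← pow_mul, ← pow_mul]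
    gcongr
    exact (abs_lt.2 hy).le
  have h := hasDerivAt_tsum_of_isPreconnected (hasSum_arcsinCoeff_mul_pow hr).summable isOpen_Ioo
    isPreconnected_Ioo (fun n y _ => hasDerivAt_arcsinTerm n y) hbound
    (y₀ := 0) ⟨neg_lt_zero.2 hr0, hr0⟩
    (summable_arcsinTerm (by simp)) (abs_lt.1 hxr)
  rwa [(hasSum_arcsinCoeff_mul_pow hx2).tsum_eq] at h

lemma arcsin_eq_tsum_arcsinTerm {x : ℝ} (hx : |x| < 1) : arcsin x = ∑' n, arcsinTerm n x := by
  have hderiv {y : ℝ} (hy : y ∈ Ioo (-1) 1) :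
      HasDerivAt (fun y => ∑' n, arcsinTerm n y) (1 / √(1 - y ^ 2)) y :=
    hasDerivAt_tsum_arcsinTerm (abs_lt.2 hy)
  refine IsOpen.eqOn_of_deriv_eq isOpen_Ioo isPreconnected_Ioo
    (fun y hy => (differentiableAt_arcsin.2 ⟨hy.1.ne', hy.2.ne⟩).differentiableWithinAt)
    (fun y hy => (hderiv hy).differentiableAt.differentiableWithinAt)
    (fun y hy => ?_) (x := 0) (by norm_num) (by simp [arcsinTerm]) (abs_lt.1 hx)
  rw [deriv_arcsin, (hderiv hy).deriv]

theorem hasSum_of_tendsto_of_le {α : Type*} {l : Filter α} [l.NeBot] {f : ℕ → α → ℝ}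
    {b : ℕ → ℝ} {L : ℝ} (hfb : ∀ n, Tendsto (f n) l (𝓝 (b n)))
    (hf : ∀ᶠ x in l, Summable (f · x) ∧ ∀ n, 0 ≤ f n x ∧ f n x ≤ b n)
    (hL : Tendsto (fun x => ∑' n, f n x) l (𝓝 L)) : HasSum b L := by
  have hb_nonneg (n : ℕ) : 0 ≤ b n :=
    ge_of_tendsto (hfb n) (hf.mono fun x hx => (hx.2 n).1)
  have hpartial (N : ℕ) : ∑ n ∈ Finset.range N, b n ≤ L :=
    le_of_tendsto_of_tendsto (tendsto_finsetSum _ fun n _ => hfb n) hL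
      (hf.mono fun x hx => hx.1.sum_le_tsum _ fun n _ => (hx.2 n).1)
  have hb : Summable b := summable_of_sum_range_le hb_nonneg hpartial
  refine hb.hasSum_iff.2 (le_antisymm (tsum_le_of_sum_range_le hb_nonneg hpartial) ?_)
  exact le_of_tendsto hL (hf.mono fun x hx => hx.1.tsum_le_tsum (fun n => (hx.2 n).2) hb)

lemma hasSum_arcsinTerm_one : HasSum (arcsinTerm · 1) (π / 2) := by
  have hIoo : ∀ᶠ x in 𝓝[<] (1 : ℝ), x ∈ Ioo 0 1 := Ioo_mem_nhdsLT zero_lt_one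
  refine hasSum_of_tendsto_of_le (l := 𝓝[<] 1) (f := arcsinTerm)
    (fun n => (continuous_arcsinTerm n).continuousWithinAt) ?_ ?_
  · filter_upwards [hIoo] with x hx
    exact ⟨summable_arcsinTerm (abs_lt.2 ⟨by linarith [hx.1], hx.2⟩), fun n =>
      ⟨arcsinTerm_nonneg hx.1.le n, arcsinTerm_le_arcsinTerm_one hx.1.le hx.2.le n⟩⟩
  · rw [← arcsin_one]
    refine continuous_arcsin.continuousWithinAt.congr' ?_
    filter_upwards [hIoo] with x hx
    exact arcsin_eq_tsum_arcsinTerm (abs_lt.2 ⟨by linarith [hx.1], hx.2⟩)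

lemma hasSum_arcsinTerm {x : ℝ} (hx : |x| ≤ 1) : HasSum (arcsinTerm · x) (arcsin x) := by
  rcases hx.lt_or_eq with hx | hx
  · rw [arcsin_eq_tsum_arcsinTerm hx]
    exact (summable_arcsinTerm hx).hasSum
  rcases (abs_eq zero_le_one).1 hx with rfl | rfl
  · rw [arcsin_one]; exact hasSum_arcsinTerm_one
  · simpa [arcsinTerm_neg, arcsin_neg] using hasSum_arcsinTerm_one.neg

open Real Nat in
theorem arcsin_series_endpoints (x : ℝ) (hx : |x| ≤ 1) :
    arcsin x =
      ∑' n : ℕ,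
        (((2 * n - 1)‼ : ℝ) / ((2 * n)‼ : ℝ)) * x ^ (2 * n + 1) / (2 * n + 1 : ℝ) :=
  (hasSum_arcsinTerm hx).tsum_eq.symm
end
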